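/- arXiv:2102.13220 — 6 statements merged into one kernel-verified Lean document; each statement's English description precedes it below -/
import Mathlib

section
/- Let A_1, A_2 ∈ ℝ^{n×n} be symmetric positive semidefinite matrices (the case d = 2 over ℝ). Then the semidefinite relaxation is exact: sup_{x ∈ ℝ^n, ‖x‖=1} (⟨x, A_1 x⟩ ⟨x, A_2 x⟩)^{1/2} = sup { (Tr(A_1 X) Tr(A_2 X))^{1/2} : X ∈ ℝ^{n×n} symmetric, X ⪰ 0, Tr(X) = 1 }. -/
/-!
Write `X = ∑ λⱼ eⱼ eⱼᵀ` in an orthonormal eigenbasis, with `λⱼ ≥ 0` and `∑ λⱼ = 1`. Two terms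
`a uuᵀ + b vvᵀ` with `u ⊥ v` can be replaced by `(a + b) xxᵀ` for a unit `x = αu + βv` without
decreasing either of the two linear functionals `tr(Aᵢ ·)`: in the coordinates `(α² - β², 2αβ)`
the rank-one matrices form the unit circle, the point `((a - b)/(a + b), 0)` lies inside it, and in
the plane some ray from that point increases both functionals (two half-planes through the origin
always share a ray) until it meets the circle. Merging the eigenvectors one at a time gives a unit
`x` with `tr(Aᵢ X) ≤ ⟨x, Aᵢ x⟩` for `i = 1, 2`, so the relaxation is never larger than `Opt`;
conversely `X = xxᵀ` is feasible.
-/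

open Matrix Submodule
open scoped RealInnerProductSpace

lemma exists_ne_zero_forall_nonneg (d c : Fin 2 → ℝ) :
    ∃ r₁ r₂ : ℝ, r₁ ^ 2 + r₂ ^ 2 ≠ 0 ∧ ∀ i, 0 ≤ r₁ * d i + r₂ * c i := by
  simp only [Fin.forall_fin_two]
  by_cases h₀ : d 0 = 0 ∧ c 0 = 0
  · rcases le_total 0 (d 1) with h₁ | h₁
    · exact ⟨1, 0, by norm_num, by simp [h₀.1], by simpa using h₁⟩
    · exact ⟨-1, 0, by norm_num, by simp [h₀.1], by simpa using h₁⟩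
  · have hne : (-c 0) ^ 2 + d 0 ^ 2 ≠ 0 := by
      contrapose! h₀
      constructor <;> nlinarith [sq_nonneg (c 0), sq_nonneg (d 0)]
    rcases le_total 0 (d 0 * c 1 - c 0 * d 1) with h₁ | h₁
    · exact ⟨-c 0, d 0, hne, le_of_eq (by ring), by linarith⟩
    · exact ⟨c 0, -d 0, by simpa using hne, le_of_eq (by ring), by linarith⟩

lemma exists_sq_add_sq_eq_one_of_ray {μ r₁ r₂ : ℝ} (hμ : μ ^ 2 ≤ 1)
    (hr : r₁ ^ 2 + r₂ ^ 2 ≠ 0) : ∃ l ≥ 0, (μ + l * r₁) ^ 2 + (l * r₂) ^ 2 = 1 := by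
  have hR : 0 < r₁ ^ 2 + r₂ ^ 2 := (by positivity : (0 : ℝ) ≤ _).lt_of_ne' hr
  set D := (μ * r₁) ^ 2 + (r₁ ^ 2 + r₂ ^ 2) * (1 - μ ^ 2)
  have hD : (μ * r₁) ^ 2 ≤ D := by nlinarith
  have hμr : μ * r₁ ≤ √D := (le_abs_self _).trans (Real.abs_le_sqrt hD)
  refine ⟨(√D - μ * r₁) / (r₁ ^ 2 + r₂ ^ 2), div_nonneg (by linarith) hR.le, ?_⟩
  field_simp
  nlinarith [Real.sq_sqrt ((sq_nonneg _).trans hD)]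

lemma exists_sq_add_sq_eq_one_forall_le {μ : ℝ} (hμ : μ ^ 2 ≤ 1) (d c : Fin 2 → ℝ) :
    ∃ s t : ℝ, s ^ 2 + t ^ 2 = 1 ∧ ∀ i, μ * d i ≤ s * d i + t * c i := by
  obtain ⟨r₁, r₂, hr, hdir⟩ := exists_ne_zero_forall_nonneg d c
  obtain ⟨l, hl, hcircle⟩ := exists_sq_add_sq_eq_one_of_ray hμ hr
  exact ⟨μ + l * r₁, l * r₂, hcircle, fun i => by nlinarith [mul_nonneg hl (hdir i)]⟩

lemma exists_half_angle {s t : ℝ} (h : s ^ 2 + t ^ 2 = 1) :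
    ∃ α β : ℝ, α ^ 2 + β ^ 2 = 1 ∧ α ^ 2 - β ^ 2 = s ∧ 2 * α * β = t := by
  obtain ⟨w, hw⟩ := IsAlgClosed.exists_pow_nat_eq (⟨s, t⟩ : ℂ) two_pos
  have hre : w.re ^ 2 - w.im ^ 2 = s := by simpa [sq] using congrArg Complex.re hw
  have him : 2 * w.re * w.im = t := by
    have := congrArg Complex.im hw
    simp [sq] at this
    linarith
  refine ⟨w.re, w.im, ?_, hre, him⟩
  have hsq : (w.re ^ 2 + w.im ^ 2) ^ 2 = 1 := by rw [← h, ← hre, ← him]; ring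
  exact (pow_eq_one_iff_of_nonneg (by positivity) two_ne_zero).mp hsq

section InnerProductSpace

variable {E : Type*} [NormedAddCommGroup E] [InnerProductSpace ℝ E]

lemma LinearMap.IsSymmetric.inner_map_smul_add_smul {T : E →ₗ[ℝ] E} (hT : T.IsSymmetric)
    (u v : E) (α β : ℝ) :
    ⟪α • u + β • v, T (α • u + β • v)⟫ =
      α ^ 2 * ⟪u, T u⟫ + β ^ 2 * ⟪v, T v⟫ + 2 * α * β * ⟪u, T v⟫ := by
  have hvu : ⟪v, T u⟫ = ⟪u, T v⟫ := by rw [← hT, real_inner_comm]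
  simp only [map_add, map_smul, inner_add_left, inner_add_right, real_inner_smul_left,
    real_inner_smul_right, hvu]
  ring

lemma exists_mem_span_pair_norm_eq_one_le {T : Fin 2 → E →ₗ[ℝ] E}
    (hT : ∀ i, (T i).IsSymmetric) {u v : E} (hu : ‖u‖ = 1) (hv : ‖v‖ = 1) (huv : ⟪u, v⟫ = 0)
    {a b : ℝ} (ha : 0 ≤ a) (hb : 0 ≤ b) :
    ∃ x ∈ span ℝ {u, v}, ‖x‖ = 1 ∧
      ∀ i, a * ⟪u, T i u⟫ + b * ⟪v, T i v⟫ ≤ (a + b) * ⟪x, T i x⟫ := by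
  rcases (add_nonneg ha hb).eq_or_lt with hab | hab
  · obtain ⟨rfl, rfl⟩ : a = 0 ∧ b = 0 := ⟨by linarith, by linarith⟩
    exact ⟨u, subset_span (by simp), hu, fun i => by simp⟩
  have hμ : ((a - b) / (a + b)) ^ 2 ≤ 1 := by
    rw [div_pow, div_le_one (by positivity)]
    nlinarith
  obtain ⟨s, t, hst, hdom⟩ := exists_sq_add_sq_eq_one_forall_le hμ
    (fun i => (⟪u, T i u⟫ - ⟪v, T i v⟫) / 2) (fun i => ⟪u, T i v⟫)
  obtain ⟨α, β, hαβ, rfl, rfl⟩ := exists_half_angle hst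
  refine ⟨α • u + β • v, add_mem (smul_mem _ _ (subset_span (by simp)))
    (smul_mem _ _ (subset_span (by simp))), ?_, fun i => ?_⟩
  · have hsq : ‖α • u + β • v‖ ^ 2 = 1 := by
      rw [norm_add_sq_real, real_inner_smul_left, real_inner_smul_right, huv, norm_smul,
        norm_smul, hu, hv]
      simp only [Real.norm_eq_abs, sq_abs, mul_one, mul_zero, add_zero]
      exact hαβ
    exact (pow_eq_one_iff_of_nonneg (norm_nonneg _) two_ne_zero).mp hsq
  · rw [(hT i).inner_map_smul_add_smul]
    have key := mul_le_mul_of_nonneg_left (hdom i) hab.le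
    rw [← mul_assoc, mul_div_cancel₀ _ hab.ne'] at key
    linear_combination key - (a + b) * (⟪u, T i u⟫ + ⟪v, T i v⟫) / 2 * hαβ

lemma Orthonormal.exists_mem_span_norm_eq_one_sum_le {ι : Type*} {T : Fin 2 → E →ₗ[ℝ] E}
    (hT : ∀ i, (T i).IsSymmetric) {e : ι → E} (he : Orthonormal ℝ e) {w : ι → ℝ}
    (hw : ∀ j, 0 ≤ w j) {s : Finset ι} (hs : s.Nonempty) :
    ∃ x ∈ span ℝ (e '' s), ‖x‖ = 1 ∧
      ∀ i, ∑ j ∈ s, w j * ⟪e j, T i (e j)⟫ ≤ (∑ j ∈ s, w j) * ⟪x, T i x⟫ := by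
  induction hs using Finset.Nonempty.cons_induction with
  | singleton a => exact ⟨e a, subset_span (by simp), he.norm_eq_one a, fun i => by simp⟩
  | cons a s ha hs ih =>
    obtain ⟨y, hy, hy₁, hyT⟩ := ih
    have hspan : span ℝ (e '' s) ≤ (ℝ ∙ e a)ᗮ := by
      refine span_le.mpr ?_
      rintro _ ⟨j, hj, rfl⟩
      exact mem_orthogonal_singleton_iff_inner_right.mpr
        (he.inner_eq_zero (ne_of_mem_of_not_mem hj ha).symm)
    obtain ⟨x, hx, hx₁, hxT⟩ := exists_mem_span_pair_norm_eq_one_le hT (he.norm_eq_one a) hy₁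
      (mem_orthogonal_singleton_iff_inner_right.mp (hspan hy)) (hw a)
      (s.sum_nonneg fun j _ => hw j)
    refine ⟨x, span_le.mpr ?_ hx, hx₁, fun i => ?_⟩
    · refine Set.insert_subset (subset_span ⟨a, by simp, rfl⟩) (Set.singleton_subset_iff.mpr ?_)
      exact span_mono (Set.image_mono (by simp)) hy
    · rw [Finset.sum_cons, Finset.sum_cons]
      linarith [hxT i, hyT i]

end InnerProductSpace

namespace Matrix

lemma trace_mul_vecMulVec_self {n R : Type*} [Fintype n] [CommSemiring R] (A : Matrix n n R)
    (x : n → R) : (A * vecMulVec x x).trace = x ⬝ᵥ A *ᵥ x := by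
  rw [mul_vecMulVec, trace_vecMulVec, dotProduct_comm]

variable {n : Type*} [Fintype n] [DecidableEq n]

lemma trace_eq_sum_inner_toEuclideanLin {𝕜 ι : Type*} [RCLike 𝕜] [Fintype ι] (M : Matrix n n 𝕜)
    (b : OrthonormalBasis ι 𝕜 (EuclideanSpace 𝕜 n)) :
    M.trace = ∑ j, inner 𝕜 (b j) (toEuclideanLin M (b j)) := by
  rw [← LinearMap.trace_eq_sum_inner, ← trace_toLin_eq M (PiLp.basisFun 2 𝕜 n)]
  rfl

lemma real_inner_toEuclideanLin_self (A : Matrix n n ℝ) (x : EuclideanSpace ℝ n) :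
    ⟪x, toEuclideanLin A x⟫ = x ⬝ᵥ A *ᵥ x := by
  rw [EuclideanSpace.inner_eq_star_dotProduct, star_trivial, dotProduct_comm]
  rfl

lemma IsHermitian.trace_mul_eq_sum_eigenvalues_mul (A : Matrix n n ℝ) {X : Matrix n n ℝ}
    (hX : X.IsHermitian) :
    (A * X).trace = ∑ j, hX.eigenvalues j *
      ⟪hX.eigenvectorBasis j, toEuclideanLin A (hX.eigenvectorBasis j)⟫ := by
  rw [trace_eq_sum_inner_toEuclideanLin _ hX.eigenvectorBasis]
  refine Finset.sum_congr rfl fun j _ => ?_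
  have hXe : toEuclideanLin X (hX.eigenvectorBasis j) = hX.eigenvalues j • hX.eigenvectorBasis j :=
    congrArg (WithLp.toLp 2) (hX.mulVec_eigenvectorBasis j)
  rw [toLpLin_mul, LinearMap.comp_apply, hXe, map_smul, real_inner_smul_right]

lemma PosSemidef.trace_mul_nonneg {A X : Matrix n n ℝ} (hA : A.PosSemidef) (hX : X.PosSemidef) :
    0 ≤ (A * X).trace := by
  rw [hX.isHermitian.trace_mul_eq_sum_eigenvalues_mul]
  refine Finset.sum_nonneg fun j _ => mul_nonneg (hX.eigenvalues_nonneg j) ?_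
  rw [real_inner_toEuclideanLin_self]
  simpa using hA.dotProduct_mulVec_nonneg (hX.isHermitian.eigenvectorBasis j)

lemma PosSemidef.exists_norm_eq_one_trace_mul_le {A : Fin 2 → Matrix n n ℝ}
    (hA : ∀ i, (A i).IsHermitian) {X : Matrix n n ℝ} (hX : X.PosSemidef) (htr : X.trace = 1) :
    ∃ x : EuclideanSpace ℝ n, ‖x‖ = 1 ∧ ∀ i, (A i * X).trace ≤ x ⬝ᵥ A i *ᵥ x := by
  have hsum : ∑ j, hX.isHermitian.eigenvalues j = 1 := by
    simpa [hX.isHermitian.trace_eq_sum_eigenvalues] using htr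
  obtain ⟨x, -, hx, hle⟩ :=
    hX.isHermitian.eigenvectorBasis.orthonormal.exists_mem_span_norm_eq_one_sum_le
    (T := fun i => toEuclideanLin (A i)) (fun i => isSymmetric_toEuclideanLin_iff.mpr (hA i))
    hX.eigenvalues_nonneg (Finset.nonempty_of_sum_ne_zero (hsum ▸ one_ne_zero))
  refine ⟨x, hx, fun i => ?_⟩
  simpa [hsum, real_inner_toEuclideanLin_self, hX.isHermitian.trace_mul_eq_sum_eigenvalues_mul]
    using hle i

end Matrix

/-- exactness of the semidefinite relaxation for `d = 2` over `ℝ`. -/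
theorem stmt_6 (n : ℕ) (A₁ A₂ : Matrix (Fin n) (Fin n) ℝ)
    (hA₁ : A₁.PosSemidef) (hA₂ : A₂.PosSemidef) :
    sSup {v : ℝ | ∃ x : EuclideanSpace ℝ (Fin n), ‖x‖ = 1 ∧
        v = Real.sqrt ((x ⬝ᵥ A₁.mulVec x) * (x ⬝ᵥ A₂.mulVec x))} =
      sSup {v : ℝ | ∃ X : Matrix (Fin n) (Fin n) ℝ, X.PosSemidef ∧ X.trace = 1 ∧
        v = Real.sqrt ((A₁ * X).trace * (A₂ * X).trace)} := by
  apply csSup_eq_csSup_of_forall_exists_le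
  · rintro _ ⟨x, hx, rfl⟩
    refine ⟨_, ⟨vecMulVec x x, ?_, ?_, rfl⟩,
      by rw [trace_mul_vecMulVec_self, trace_mul_vecMulVec_self]⟩
    · simpa using posSemidef_vecMulVec_self_star (WithLp.ofLp x)
    · have hxx : ⟪x, x⟫ = 1 := by rw [real_inner_self_eq_norm_sq, hx, one_pow]
      rwa [EuclideanSpace.inner_eq_star_dotProduct, star_trivial, ← trace_vecMulVec] at hxx
  · rintro _ ⟨X, hX, htr, rfl⟩
    obtain ⟨x, hx, hle⟩ := hX.exists_norm_eq_one_trace_mul_le (A := ![A₁, A₂])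
      (Fin.forall_fin_two.mpr ⟨hA₁.isHermitian, hA₂.isHermitian⟩) htr
    refine ⟨_, ⟨x, hx, rfl⟩, Real.sqrt_le_sqrt (mul_le_mul (hle 0) (hle 1)
      (hA₂.trace_mul_nonneg hX) ?_)⟩
    simpa using hA₁.dotProduct_mulVec_nonneg (WithLp.ofLp x)
end

section
/- Let A_1, …, A_d ∈ ℝ^{n×n} be symmetric positive semidefinite matrices that pairwise commute: A_i A_j = A_j A_i for all i, j. Then Opt(A) = OptSDP(A). -/
/-!
Commuting symmetric matrices have a common orthonormal eigenbasis `b`. In that basis every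
`Tr (A_i X)` is the same weighted sum `∑ₖ μᵢₖ pₖ` of the eigenvalues, with weights
`pₖ = ⟨bₖ, X bₖ⟩ ≥ 0` summing to `Tr X = 1`; the unit vector `x = ∑ₖ √pₖ bₖ` has
`⟨x, Aᵢ x⟩ = ∑ₖ μᵢₖ pₖ` as well. Conversely a unit vector `x` gives the feasible point `X = x xᵀ`.
So both optimisation problems range over the same set of values.
-/

open Matrix
open scoped InnerProductSpace

namespace LinearMap.IsSymmetric

variable {𝕜 E ι : Type*} [RCLike 𝕜] [NormedAddCommGroup E] [InnerProductSpace 𝕜 E]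
  [FiniteDimensional 𝕜 E]

theorem exists_orthonormalBasis_apply_eq_smul_of_pairwise_commute {T : ι → Module.End 𝕜 E}
    (hT : ∀ i, (T i).IsSymmetric) (hcomm : Pairwise fun i j ↦ Commute (T i) (T j)) :
    ∃ (b : OrthonormalBasis (Fin (Module.finrank 𝕜 E)) 𝕜 E)
      (μ : ι → Fin (Module.finrank 𝕜 E) → 𝕜), ∀ i k, T i (b k) = μ i k • b k := by
  classical
  let V : (ι → 𝕜) → Submodule 𝕜 E := fun χ ↦ ⨅ i, Module.End.eigenspace (T i) (χ i)
  have hV : DirectSum.IsInternal V := directSum_isInternal_of_pairwise_commute hT hcomm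
  -- only finitely many joint eigenspaces are nonzero
  have : Fintype {χ // V χ ≠ ⊥} := hV.submodule_iSupIndep.fintypeNeBotOfFiniteDimensional
  have hV' := DirectSum.isInternal_ne_bot_iff.mpr hV
  have hOrth : OrthogonalFamily 𝕜 (fun χ : {χ // V χ ≠ ⊥} ↦ V χ) fun χ ↦ (V χ).subtypeₗᵢ :=
    (orthogonalFamily_iInf_eigenspaces hT).comp Subtype.val_injective
  refine ⟨hV'.subordinateOrthonormalBasis rfl hOrth,
    fun i k ↦ (hV'.subordinateOrthonormalBasisIndex rfl k hOrth).1 i, fun i k ↦ ?_⟩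
  exact Module.End.mem_eigenspace_iff.mp <|
    (Submodule.mem_iInf _).mp (hV'.subordinateOrthonormalBasis_subordinate rfl k hOrth) i

end LinearMap.IsSymmetric

section EigenBasis

variable {E ι : Type*} [NormedAddCommGroup E] [InnerProductSpace ℝ E] [Fintype ι]
  {T : E →ₗ[ℝ] E} {b : OrthonormalBasis ι ℝ E} {μ : ι → ℝ}

theorem OrthonormalBasis.inner_apply_self_eq_sum_of_apply_eq_smul (hT : T.IsSymmetric)
    (h : ∀ k, T (b k) = μ k • b k) (x : E) :
    ⟪x, T x⟫_ℝ = ∑ k, μ k * ⟪b k, x⟫_ℝ ^ 2 := by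
  rw [← b.sum_inner_mul_inner]
  refine Finset.sum_congr rfl fun k _ ↦ ?_
  rw [← hT, h, real_inner_smul_left, real_inner_comm x]
  ring

theorem OrthonormalBasis.trace_mul_eq_sum_of_apply_eq_smul (hT : T.IsSymmetric)
    (h : ∀ k, T (b k) = μ k • b k) (S : E →ₗ[ℝ] E) :
    LinearMap.trace ℝ E (T * S) = ∑ k, μ k * ⟪b k, S (b k)⟫_ℝ := by
  rw [LinearMap.trace_eq_sum_inner _ b]
  refine Finset.sum_congr rfl fun k _ ↦ ?_
  rw [Module.End.mul_apply, ← hT, h, real_inner_smul_left]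

end EigenBasis

theorem exists_norm_eq_one_forall_inner_apply_self_eq_trace_mul {E ι : Type*}
    [NormedAddCommGroup E] [InnerProductSpace ℝ E] [FiniteDimensional ℝ E]
    {T : ι → E →ₗ[ℝ] E} (hT : ∀ i, (T i).IsSymmetric)
    (hcomm : Pairwise fun i j ↦ Commute (T i) (T j)) {S : E →ₗ[ℝ] E} (hS : S.IsPositive)
    (htr : LinearMap.trace ℝ E S = 1) :
    ∃ x : E, ‖x‖ = 1 ∧ ∀ i, ⟪x, T i x⟫_ℝ = LinearMap.trace ℝ E (T i * S) := by
  obtain ⟨b, μ, hb⟩ :=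
    LinearMap.IsSymmetric.exists_orthonormalBasis_apply_eq_smul_of_pairwise_commute hT hcomm
  set p := fun k ↦ ⟪b k, S (b k)⟫_ℝ
  have hp : ∀ k, 0 ≤ p k := fun k ↦ hS.inner_nonneg_right (b k)
  let x := b.repr.symm (WithLp.toLp 2 fun k ↦ √(p k))
  have hx : ∀ k, ⟪b k, x⟫_ℝ ^ 2 = p k := fun k ↦ by
    rw [← b.repr_apply_apply, LinearIsometryEquiv.apply_symm_apply, PiLp.toLp_apply,
      Real.sq_sqrt (hp k)]
  refine ⟨x, ?_, fun i ↦ ?_⟩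
  · rw [← pow_eq_one_iff_of_nonneg (norm_nonneg x) two_ne_zero, ← b.sum_sq_inner_right]
    simp only [hx]
    rw [← htr, LinearMap.trace_eq_sum_inner _ b]
  · rw [b.inner_apply_self_eq_sum_of_apply_eq_smul (hT i) (hb i),
      b.trace_mul_eq_sum_of_apply_eq_smul (hT i) (hb i)]
    simp only [hx, p]

namespace Matrix

variable {n : Type*} [Fintype n]

theorem trace_mul_vecMulVec {R : Type*} [CommSemiring R] (A : Matrix n n R) (x y : n → R) :
    (A * vecMulVec x y).trace = y ⬝ᵥ A *ᵥ x := by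
  rw [mul_vecMulVec, trace_vecMulVec, dotProduct_comm]

theorem dotProduct_ofLp_eq_inner (x y : EuclideanSpace ℝ n) : x.ofLp ⬝ᵥ y.ofLp = ⟪x, y⟫_ℝ := by
  rw [EuclideanSpace.inner_eq_star_dotProduct, star_trivial, dotProduct_comm]

variable [DecidableEq n]

theorem trace_eq_trace_toEuclideanLin {𝕜 : Type*} [RCLike 𝕜] (A : Matrix n n 𝕜) :
    A.trace = LinearMap.trace 𝕜 _ (toEuclideanLin A) := by
  rw [toEuclideanLin_eq_toLin_orthonormal, trace_toLin_eq]

theorem dotProduct_mulVec_eq_inner_toEuclideanLin (A : Matrix n n ℝ) (x : EuclideanSpace ℝ n) :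
    x ⬝ᵥ A *ᵥ x = ⟪x, toEuclideanLin A x⟫_ℝ :=
  dotProduct_ofLp_eq_inner x (toEuclideanLin A x)

theorem exists_norm_eq_one_forall_dotProduct_mulVec_eq_trace_mul {ι : Type*}
    {A : ι → Matrix n n ℝ} (hA : ∀ i, (A i).IsHermitian)
    (hcomm : Pairwise fun i j ↦ Commute (A i) (A j)) {X : Matrix n n ℝ} (hX : X.PosSemidef)
    (htr : X.trace = 1) :
    ∃ x : EuclideanSpace ℝ n, ‖x‖ = 1 ∧ ∀ i, x ⬝ᵥ A i *ᵥ x = (A i * X).trace := by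
  obtain ⟨x, hx, hxA⟩ := exists_norm_eq_one_forall_inner_apply_self_eq_trace_mul
    (T := fun i ↦ toEuclideanLin (A i)) (fun i ↦ isSymmetric_toEuclideanLin_iff.mpr (hA i))
    (fun i j hij ↦ (hcomm hij).map (toLpLinAlgEquiv 2)) (isPositive_toEuclideanLin_iff.mpr hX)
    (by rw [← trace_eq_trace_toEuclideanLin, htr])
  refine ⟨x, hx, fun i ↦ ?_⟩
  rw [dotProduct_mulVec_eq_inner_toEuclideanLin, hxA, trace_eq_trace_toEuclideanLin,
    toLpLin_mul_same, Module.End.mul_eq_comp]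

end Matrix

theorem stmt_7_general (n d : ℕ)
    (A : Fin d → Matrix (Fin n) (Fin n) ℝ) (hA : ∀ i, (A i).PosSemidef)
    (hcomm : ∀ i j, A i * A j = A j * A i) :
    sSup {v : ℝ | ∃ x : EuclideanSpace ℝ (Fin n), ‖x‖ = 1 ∧
        v = (∏ i, (x ⬝ᵥ (A i).mulVec x)) ^ ((d : ℝ)⁻¹)} =
      sSup {v : ℝ | ∃ X : Matrix (Fin n) (Fin n) ℝ, X.PosSemidef ∧ X.trace = 1 ∧
        v = (∏ i, (A i * X).trace) ^ ((d : ℝ)⁻¹)} := by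
  congr 1
  ext v
  constructor
  · rintro ⟨x, hx, rfl⟩
    refine ⟨vecMulVec x x, posSemidef_vecMulVec_self_star x, ?_, ?_⟩
    · rw [trace_vecMulVec, dotProduct_ofLp_eq_inner, real_inner_self_eq_norm_sq, hx, one_pow]
    · simp only [trace_mul_vecMulVec]
  · rintro ⟨X, hX, htr, rfl⟩
    obtain ⟨x, hx, hxA⟩ :=
      exists_norm_eq_one_forall_dotProduct_mulVec_eq_trace_mul (fun i ↦ (hA i).isHermitian)
        (fun i j _ ↦ hcomm i j) hX htr
    exact ⟨x, hx, by simp only [hxA]⟩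

/-- exactness of the semidefinite relaxation for pairwise
commuting PSD matrices. -/
theorem stmt_7 (n d : ℕ) (hn : 0 < n) (hd : 0 < d)
    (A : Fin d → Matrix (Fin n) (Fin n) ℝ) (hA : ∀ i, (A i).PosSemidef)
    (hcomm : ∀ i j, A i * A j = A j * A i) :
    sSup {v : ℝ | ∃ x : EuclideanSpace ℝ (Fin n), ‖x‖ = 1 ∧
        v = (∏ i, (x ⬝ᵥ (A i).mulVec x)) ^ ((d : ℝ)⁻¹)} =
      sSup {v : ℝ | ∃ X : Matrix (Fin n) (Fin n) ℝ, X.PosSemidef ∧ X.trace = 1 ∧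
        v = (∏ i, (A i * X).trace) ^ ((d : ℝ)⁻¹)} :=
  stmt_7_general n d A hA hcomm
end

section
/- Let X be a random variable with the Gamma distribution of shape α > 0 and rate β > 0, i.e. with density p(x) = Γ(α)^{-1} β^α x^{α−1} e^{−βx} on (0, ∞). Then E[log X] = ψ(α) − log β, where ψ = Γ'/Γ is the digamma function. -/
/-!
Substituting `y = b x`, `E[log X] = Γ(a)⁻¹ ∫₀^∞ e^{-y} y^{a-1} (log y - log b) dy`.
Differentiating Euler's integral under the integral sign identifies the first part with `Γ'(a)`;
the log-weighted integrand is integrable because `|log t| ≤ (t^ε + t^{-ε}) / ε`.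
-/

open MeasureTheory ProbabilityTheory

/-- The digamma function `ψ = Γ'/Γ`, the derivative of `log ∘ Γ`. -/
noncomputable def digamma (x : ℝ) : ℝ := deriv (fun t : ℝ => Real.log (Real.Gamma t)) x

open Real Set Filter Topology

lemma abs_log_le_rpow_add_rpow_neg_div {x ε : ℝ} (hx : 0 < x) (hε : 0 < ε) :
    |log x| ≤ (x ^ ε + x ^ (-ε)) / ε := by
  have h₁ := log_le_rpow_div hx.le hε
  have h₂ := log_le_rpow_div (inv_pos.2 hx).le hε
  rw [log_inv, inv_rpow hx.le, ← rpow_neg hx.le] at h₂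
  have h₁' : 0 ≤ x ^ ε / ε := by positivity
  have h₂' : 0 ≤ x ^ (-ε) / ε := by positivity
  rw [abs_le, add_div]
  constructor <;> linarith

lemma integrableOn_exp_neg_mul_rpow_mul_log {a : ℝ} (ha : 0 < a) :
    IntegrableOn (fun t ↦ exp (-t) * t ^ (a - 1) * log t) (Ioi 0) := by
  obtain ⟨ε, hε₀, hεa⟩ : ∃ ε, 0 < ε ∧ ε < a := ⟨a / 2, by linarith, by linarith⟩
  have hbound : IntegrableOn
      (fun t ↦ (exp (-t) * t ^ (a + ε - 1) + exp (-t) * t ^ (a - ε - 1)) / ε) (Ioi 0) :=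
    ((GammaIntegral_convergent (by linarith)).add
      (GammaIntegral_convergent (by linarith))).div_const ε
  refine hbound.mono' ?_ ?_
  · exact (by fun_prop : Measurable fun t ↦ exp (-t) * t ^ (a - 1) * log t).aestronglyMeasurable
  · filter_upwards [ae_restrict_mem measurableSet_Ioi] with t (ht : 0 < t)
    calc ‖exp (-t) * t ^ (a - 1) * log t‖ = exp (-t) * t ^ (a - 1) * |log t| := by
          rw [norm_mul, Real.norm_eq_abs, Real.norm_eq_abs, abs_of_nonneg (by positivity)]
      _ ≤ exp (-t) * t ^ (a - 1) * ((t ^ ε + t ^ (-ε)) / ε) := by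
          gcongr; exact abs_log_le_rpow_add_rpow_neg_div ht hε₀
      _ = _ := by
          rw [show a + ε - 1 = (a - 1) + ε by ring, show a - ε - 1 = (a - 1) + -ε by ring,
            rpow_add ht, rpow_add ht]
          ring

lemma hasDerivAt_Gamma_eq_integral {a : ℝ} (ha : 0 < a) :
    HasDerivAt Gamma (∫ t in Ioi 0, exp (-t) * t ^ (a - 1) * log t) a := by
  have hre : 0 < (a : ℂ).re := by simpa using ha
  have hΓ : Complex.Gamma =ᶠ[𝓝 (a : ℂ)] Complex.GammaIntegral := by
    filter_upwards [Complex.continuous_re.isOpen_preimage _ isOpen_Ioi |>.mem_nhds hre]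
      with s hs using Complex.Gamma_eq_integral hs
  have hC := (Complex.hasDerivAt_GammaIntegral hre).congr_of_eventuallyEq hΓ
  have hcast : ∫ t : ℝ in Ioi 0, (t : ℂ) ^ ((a : ℂ) - 1) * (log t * exp (-t))
      = ↑(∫ t in Ioi 0, exp (-t) * t ^ (a - 1) * log t) := by
    rw [← integral_complex_ofReal]
    refine setIntegral_congr_fun measurableSet_Ioi fun t (ht : 0 < t) ↦ ?_
    push_cast
    rw [← Complex.ofReal_one, ← Complex.ofReal_sub, Complex.ofReal_cpow ht.le]
    ring
  rw [hcast] at hC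
  simpa [Complex.Gamma_ofReal] using hC.real_of_complex

lemma digamma_eq_integral_div_Gamma {a : ℝ} (ha : 0 < a) :
    digamma a = (∫ t in Ioi 0, exp (-t) * t ^ (a - 1) * log t) / Gamma a :=
  ((hasDerivAt_Gamma_eq_integral ha).log (Gamma_pos_of_pos ha).ne').deriv

lemma integral_gammaMeasure {a r : ℝ} (ha : 0 < a) (hr : 0 < r) (f : ℝ → ℝ) :
    ∫ x, f x ∂gammaMeasure a r
      = r ^ a / Gamma a * ∫ x in Ioi 0, exp (-(r * x)) * x ^ (a - 1) * f x := by
  rw [gammaMeasure, integral_withDensity_eq_integral_toReal_smul (f := gammaPDF a r)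
      (measurable_gammaPDFReal a r).ennreal_ofReal (ae_of_all _ fun _ ↦ ENNReal.ofReal_lt_top),
    ← setIntegral_eq_integral_of_forall_compl_eq_zero (s := Ici 0), integral_Ici_eq_integral_Ioi,
    ← integral_const_mul]
  · refine setIntegral_congr_fun measurableSet_Ioi fun x (hx : 0 < x) ↦ ?_
    rw [gammaPDF, ENNReal.toReal_ofReal (gammaPDFReal_nonneg ha hr x), gammaPDFReal,
      if_pos hx.le, smul_eq_mul]
    ring
  · intro x (hx : ¬ 0 ≤ x)
    simp [gammaPDF, gammaPDFReal, hx]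

lemma setIntegral_Ioi_exp_neg_mul_mul_rpow_mul {r : ℝ} (hr : 0 < r) (a : ℝ) (f : ℝ → ℝ) :
    ∫ x in Ioi 0, exp (-(r * x)) * x ^ (a - 1) * f x
      = (r ^ a)⁻¹ * ∫ y in Ioi 0, exp (-y) * y ^ (a - 1) * f (y / r) := by
  have hsub := integral_comp_mul_left_Ioi (fun y ↦ exp (-y) * (y / r) ^ (a - 1) * f (y / r)) 0 hr
  simp only [mul_zero, mul_div_cancel_left₀ _ hr.ne', smul_eq_mul] at hsub
  rw [hsub, ← integral_const_mul, ← integral_const_mul]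
  refine setIntegral_congr_fun measurableSet_Ioi fun y (hy : 0 < y) ↦ ?_
  rw [div_rpow hy.le hr.le, rpow_sub_one hr.ne']
  field_simp

/-- if `X ~ Gamma(α, β)` (shape `α`, rate `β`) then
`E[log X] = ψ(α) − log β`. -/
theorem stmt_8 (a b : ℝ) (ha : 0 < a) (hb : 0 < b) :
    ∫ x, Real.log x ∂(gammaMeasure a b) = digamma a - Real.log b := by
  have hsplit : ∫ y in Ioi 0, exp (-y) * y ^ (a - 1) * log (y / b)
      = (∫ y in Ioi 0, exp (-y) * y ^ (a - 1) * log y) - log b * Gamma a := by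
    rw [Gamma_eq_integral ha, ← integral_const_mul, ← integral_sub
      (integrableOn_exp_neg_mul_rpow_mul_log ha) ((GammaIntegral_convergent ha).const_mul _)]
    refine setIntegral_congr_fun measurableSet_Ioi fun y (hy : 0 < y) ↦ ?_
    rw [log_div hy.ne' hb.ne']
    ring
  rw [integral_gammaMeasure ha hb, setIntegral_Ioi_exp_neg_mul_mul_rpow_mul hb, hsplit,
    digamma_eq_integral_div_Gamma ha]
  have hΓ : Gamma a ≠ 0 := (Gamma_pos_of_pos ha).ne'
  have hba : b ^ a ≠ 0 := (rpow_pos_of_pos hb a).ne'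
  field_simp
end

section
/- Let A_1, …, A_d ∈ ℝ^{n×n} be symmetric positive semidefinite matrices and q_i(x) = ⟨x, A_i x⟩. Fix integers k ≥ 1 and m ≥ 1 with m·k ≤ d. If λ ≥ 0 is such that λ‖x‖^{2k} − E_k(q_1(x), …, q_d(x)) is a sum of squares of real polynomials in x = (x_1, …, x_n), then λ^m ‖x‖^{2mk} − E_{mk}(q_1(x), …, q_d(x)) is also a sum of squares. Consequently srel_{mk}(A) ≤ srel_k(A). -/
open Matrix MvPolynomial

/-- The quadratic form `x ↦ xᵀ A x` as a polynomial. -/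
noncomputable def quadFormPoly (n : ℕ) (A : Matrix (Fin n) (Fin n) ℝ) :
    MvPolynomial (Fin n) ℝ :=
  ∑ a, ∑ b, C (A a b) * X a * X b

/-- The polynomial `‖x‖² = ∑ xⱼ²`. -/
noncomputable def normSqPoly (n : ℕ) : MvPolynomial (Fin n) ℝ := ∑ j, X j ^ 2

/-- The normalized elementary symmetric polynomial
`E_k(q₁(x), …, q_d(x))` of the quadratic forms `qᵢ(x) = xᵀ Aᵢ x`. -/
noncomputable def esymQuadPoly (n d k : ℕ) (A : Fin d → Matrix (Fin n) (Fin n) ℝ) :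
    MvPolynomial (Fin n) ℝ :=
  C ((d.choose k : ℝ)⁻¹) *
    ∑ I ∈ Finset.powersetCard k (Finset.univ : Finset (Fin d)),
      ∏ i ∈ I, quadFormPoly n (A i)

/-- A polynomial is a sum of squares. -/
def IsSOS {n : ℕ} (p : MvPolynomial (Fin n) ℝ) : Prop :=
  ∃ (m : ℕ) (f : Fin m → MvPolynomial (Fin n) ℝ), p = ∑ j, (f j) ^ 2

/-- `srel_k(A)`, the degree-`k` Maclaurin relaxation value. -/
noncomputable def srel (n d k : ℕ) (A : Fin d → Matrix (Fin n) (Fin n) ℝ) : ℝ :=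
  (sInf {lam : ℝ | 0 ≤ lam ∧
      IsSOS (C lam * normSqPoly n ^ k - esymQuadPoly n d k A)}) ^ ((k : ℝ)⁻¹)

/-!
Put `X = λ‖x‖^{2k}` and `Y = E_k(q)`. Both are sums of squares, so
`X^m - Y^m = (X - Y) · ∑ X^i Y^{m-1-i}` is one, and it remains to show that `Y^m - E_{mk}(q)` is
a sum of squares whenever every `qᵢ` is: an SOS version of Maclaurin's inequality, proved as in
Muirhead's inequality. Expanding the power, `E_k^m` is an average of symmetric means
`(1/d!) ∑_σ ∏ q_{σ i}^{a_i}` of exponent vectors `a` with `∑ aᵢ = mk`. Moving one unit of exponent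
from an entry `c + 1 ≥ 2` to an entry `0` lowers such a mean by a sum of squares: pairing `σ` with
`σ ∘ (i j)` leaves `u^{c+1} + v^{c+1} - u^c v - v^c u = (u - v)² ∑ u^s v^{c-1-s}` times an SOS
factor. The moves stop at a `0/1` vector, whose symmetric mean is `E_{mk}(q)`.
Finally `λ ↦ λ^m` maps the feasible set of `srel_k` into that of `srel_{mk}`.
-/

open Finset Equiv

section SumsOfSquares

variable {R : Type*}

theorem IsSumSq.pow [CommSemiring R] {x : R} (hx : IsSumSq x) (m : ℕ) : IsSumSq (x ^ m) := by
  simpa using pow_mem (S := Subsemiring.sumSq R) (by simpa) m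

variable [CommRing R]

theorem IsSumSq.pow_sub_pow {x y : R} (hx : IsSumSq x) (hy : IsSumSq y) (hxy : IsSumSq (x - y))
    (m : ℕ) : IsSumSq (x ^ m - y ^ m) := by
  rw [← geom_sum₂_mul]
  exact (IsSumSq.sum fun i _ => (hx.pow i).mul (hy.pow _)).mul hxy

theorem IsSumSq.pow_succ_add_pow_succ_sub {u v : R} (hu : IsSumSq u) (hv : IsSumSq v) (c : ℕ) :
    IsSumSq (u ^ (c + 1) + v ^ (c + 1) - (u ^ c * v + v ^ c * u)) := by
  have h : u ^ (c + 1) + v ^ (c + 1) - (u ^ c * v + v ^ c * u)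
      = (u - v) ^ 2 * ∑ s ∈ range c, u ^ s * v ^ (c - 1 - s) := by
    linear_combination (-(u - v)) * geom_sum₂_mul u v c
  rw [h]
  exact (IsSquare.sq _).isSumSq.mul (IsSumSq.sum fun s _ => (hu.pow s).mul (hv.pow _))

variable [Algebra ℝ R]

theorem IsSumSq.algebraMap_real {c : ℝ} (hc : 0 ≤ c) : IsSumSq (algebraMap ℝ R c) := by
  rw [← Real.mul_self_sqrt hc, map_mul]
  exact .mul_self _

theorem IsSumSq.real_smul {c : ℝ} (hc : 0 ≤ c) {x : R} (hx : IsSumSq x) : IsSumSq (c • x) := by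
  rw [Algebra.smul_def]
  exact (algebraMap_real hc).mul hx

end SumsOfSquares

@[to_additive]
theorem prod_univ_eq_mul_mul_prod_compl_pair {M ι : Type*} [CommMonoid M] [Fintype ι]
    [DecidableEq ι] {i j : ι} (hij : i ≠ j) (f : ι → M) :
    ∏ l, f l = f i * f j * ∏ l ∈ {i, j}ᶜ, f l := by
  rw [← prod_mul_prod_compl {i, j}, prod_pair hij]

theorem pow_sum_prod_eq_sum_prod_pow {R α : Type*} [CommSemiring R] [Fintype α] [DecidableEq α]
    (x : α → R) (s : Finset (Finset α)) (m : ℕ) :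
    (∑ I ∈ s, ∏ i ∈ I, x i) ^ m
      = ∑ I ∈ Fintype.piFinset fun _ : Fin m => s, ∏ i, x i ^ #{j | i ∈ I j} := by
  rw [← Fin.prod_const, prod_univ_sum]
  refine sum_congr rfl fun I _ => ?_
  simp_rw [card_filter, ← prod_pow_eq_pow_sum, pow_ite, pow_one, pow_zero]
  rw [prod_comm]
  simp [prod_ite_mem]

section Symmetrization

variable {R : Type*} [CommRing R] [Algebra ℝ R] {d : ℕ}

noncomputable def symmetrize (F : (Fin d → R) → R) (x : Fin d → R) : R :=
  (d.factorial : ℝ)⁻¹ • ∑ σ : Perm (Fin d), F (x ∘ σ)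

theorem symmetrize_of_comp_perm {F : (Fin d → R) → R} (hF : ∀ (σ : Perm (Fin d)) y, F (y ∘ σ) = F y)
    (x : Fin d → R) : symmetrize F x = F x := by
  rw [symmetrize, sum_congr rfl fun σ _ => hF σ x, sum_const, card_univ, Fintype.card_perm,
    Fintype.card_fin, ← Nat.cast_smul_eq_nsmul ℝ, smul_smul,
    inv_mul_cancel₀ (by positivity), one_smul]

theorem symmetrize_sum {ι : Type*} (s : Finset ι) (F : ι → (Fin d → R) → R) (x : Fin d → R) :
    symmetrize (fun y => ∑ t ∈ s, F t y) x = ∑ t ∈ s, symmetrize (F t) x := by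
  simp only [symmetrize, ← smul_sum]
  rw [sum_comm]

theorem symmetrize_smul (c : ℝ) (F : (Fin d → R) → R) (x : Fin d → R) :
    symmetrize (fun y => c • F y) x = c • symmetrize F x := by
  simp only [symmetrize, ← smul_sum, smul_comm c]

theorem symmetrize_comp_perm (F : (Fin d → R) → R) (ρ : Perm (Fin d)) (x : Fin d → R) :
    symmetrize (fun y => F (y ∘ ρ)) x = symmetrize F x := by
  simp only [symmetrize]
  congr 1
  exact Fintype.sum_equiv (Equiv.mulRight ρ) _ _ fun σ => rfl

noncomputable def symmetricMean (x : Fin d → R) (a : Fin d → ℕ) : R :=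
  symmetrize (fun y => ∏ i, y i ^ a i) x

noncomputable def esymmMean (x : Fin d → R) (k : ℕ) : R :=
  (d.choose k : ℝ)⁻¹ • ∑ I ∈ powersetCard k univ, ∏ i ∈ I, x i

theorem symmetricMean_comp_perm (x : Fin d → R) (a : Fin d → ℕ) (ρ : Perm (Fin d)) :
    symmetricMean x (a ∘ ρ) = symmetricMean x a := by
  rw [symmetricMean, ← symmetrize_comp_perm _ ρ]
  congr 1
  funext y
  exact prod_comp ρ fun i => y i ^ a i

theorem sum_powersetCard_prod_comp_perm (x : Fin d → R) (σ : Perm (Fin d)) (k : ℕ) :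
    ∑ I ∈ powersetCard k univ, ∏ i ∈ I, (x ∘ σ) i = ∑ I ∈ powersetCard k univ, ∏ i ∈ I, x i := by
  have h (y : Fin d → R) :
      ∑ I ∈ powersetCard k univ, ∏ i ∈ I, y i = aeval y (esymm (Fin d) ℝ k) := by
    simp [esymm]
  rw [h, h, ← aeval_rename, esymm_isSymmetric]

theorem esymmMean_comp_perm (x : Fin d → R) (σ : Perm (Fin d)) (k : ℕ) :
    esymmMean (x ∘ σ) k = esymmMean x k := by
  rw [esymmMean, esymmMean, sum_powersetCard_prod_comp_perm]

theorem exists_perm_mem_iff {I J : Finset (Fin d)} (h : #I = #J) :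
    ∃ ρ : Perm (Fin d), ∀ i, ρ i ∈ J ↔ i ∈ I := by
  let e : {i // i ∈ I} ≃ {i // i ∈ J} := Fintype.equivOfCardEq (by simpa using h)
  exact ⟨e.extendSubtype, fun i => ⟨fun hi => by_contra fun hI => e.extendSubtype_not_mem i hI hi,
    e.extendSubtype_mem i⟩⟩

theorem symmetricMean_indicator (x : Fin d → R) (I : Finset (Fin d)) :
    symmetricMean x (fun i => if i ∈ I then 1 else 0) = esymmMean x #I := by
  have hmon (J : Finset (Fin d)) (y : Fin d → R) :
      ∏ i, y i ^ (if i ∈ J then 1 else 0) = ∏ i ∈ J, y i := by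
    simp [pow_ite, prod_ite_mem]
  have hall : ∀ J ∈ powersetCard #I univ, symmetricMean x (fun i => if i ∈ J then 1 else 0)
      = symmetricMean x (fun i => if i ∈ I then 1 else 0) := by
    intro J hJ
    obtain ⟨ρ, hρ⟩ := exists_perm_mem_iff (mem_powersetCard_univ.mp hJ).symm
    rw [← symmetricMean_comp_perm x _ ρ]
    simp only [Function.comp_def, hρ]
  have hsum : ∑ J ∈ powersetCard #I univ, symmetricMean x (fun i => if i ∈ J then 1 else 0)
      = ∑ J ∈ powersetCard #I univ, ∏ i ∈ J, x i := by
    simp only [symmetricMean, hmon, ← symmetrize_sum]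
    exact symmetrize_of_comp_perm (fun σ y => sum_powersetCard_prod_comp_perm y σ _) x
  rw [sum_congr rfl hall, sum_const, card_powersetCard, card_univ, Fintype.card_fin] at hsum
  have hchoose : (d.choose #I : ℝ) ≠ 0 :=
    Nat.cast_ne_zero.2 (Nat.choose_pos (by simpa using card_le_univ I)).ne'
  rw [esymmMean, ← hsum, ← Nat.cast_smul_eq_nsmul ℝ, smul_smul, inv_mul_cancel₀ hchoose, one_smul]

theorem symmetricMean_eq_smul_sum_add_mul_right (x : Fin d → R) (a : Fin d → ℕ)
    (τ : Perm (Fin d)) :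
    symmetricMean x a
      = (2 * d.factorial : ℝ)⁻¹ • ∑ σ : Perm (Fin d),
          (∏ l, x (σ l) ^ a l + ∏ l, x ((σ * τ) l) ^ a l) := by
  rw [sum_add_distrib, Fintype.sum_equiv (Equiv.mulRight τ) (fun σ => ∏ l, x ((σ * τ) l) ^ a l)
    (fun σ => ∏ l, x (σ l) ^ a l) fun σ => rfl, ← two_smul ℝ, smul_smul, mul_inv,
    mul_comm (2 : ℝ)⁻¹, mul_assoc, inv_mul_cancel₀ two_ne_zero, mul_one]
  rfl

end Symmetrization

section Muirhead

variable {R : Type*} [CommRing R] [Algebra ℝ R] {d : ℕ} {x : Fin d → R}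

theorem isSumSq_symmetricMean_sub_update (hx : ∀ i, IsSumSq (x i)) {a : Fin d → ℕ} {i j : Fin d}
    (hij : i ≠ j) {c : ℕ} (hai : a i = c + 2) (haj : a j = 0) :
    IsSumSq (symmetricMean x a
      - symmetricMean x (Function.update (Function.update a i (c + 1)) j 1)) := by
  set a' := Function.update (Function.update a i (c + 1)) j 1
  set τ := swap i j
  have ha'i : a' i = c + 1 := by simp [a', hij]
  have ha'j : a' j = 1 := by simp [a']
  have hsplit (σ : Perm (Fin d)) (b : Fin d → ℕ) :
      ∏ l, x (σ l) ^ b l = x (σ i) ^ b i * x (σ j) ^ b j * ∏ l ∈ {i, j}ᶜ, x (σ l) ^ b l :=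
    prod_univ_eq_mul_mul_prod_compl_pair hij _
  have hsplitτ (σ : Perm (Fin d)) (b : Fin d → ℕ) :
      ∏ l, x ((σ * τ) l) ^ b l
        = x (σ j) ^ b i * x (σ i) ^ b j * ∏ l ∈ {i, j}ᶜ, x (σ l) ^ b l := by
    rw [prod_univ_eq_mul_mul_prod_compl_pair hij]
    refine congr_arg₂ _ (by simp [τ]) (prod_congr rfl fun l hl => ?_)
    simp only [mem_compl, mem_insert, mem_singleton, not_or] at hl
    simp [τ, swap_apply_of_ne_of_ne hl.1 hl.2]
  have hrest (σ : Perm (Fin d)) :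
      ∏ l ∈ {i, j}ᶜ, x (σ l) ^ a' l = ∏ l ∈ {i, j}ᶜ, x (σ l) ^ a l := by
    refine prod_congr rfl fun l hl => ?_
    simp only [mem_compl, mem_insert, mem_singleton, not_or] at hl
    simp [a', hl.1, hl.2]
  rw [symmetricMean_eq_smul_sum_add_mul_right x a τ,
    symmetricMean_eq_smul_sum_add_mul_right x a' τ, ← smul_sub, ← sum_sub_distrib]
  refine .real_smul (by positivity) (.sum fun σ _ => ?_)
  have hσ : ∏ l, x (σ l) ^ a l + ∏ l, x ((σ * τ) l) ^ a l
      - (∏ l, x (σ l) ^ a' l + ∏ l, x ((σ * τ) l) ^ a' l)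
      = (x (σ i) ^ (c + 2) + x (σ j) ^ (c + 2)
          - (x (σ i) ^ (c + 1) * x (σ j) + x (σ j) ^ (c + 1) * x (σ i)))
        * ∏ l ∈ {i, j}ᶜ, x (σ l) ^ a l := by
    rw [hsplitτ, hsplitτ, hsplit, hsplit, hrest, hai, haj, ha'i, ha'j]
    ring
  rw [hσ]
  exact (IsSumSq.pow_succ_add_pow_succ_sub (hx _) (hx _) _).mul
    (.prod fun l _ => (hx _).pow _)

theorem isSumSq_symmetricMean_sub_esymmMean (hx : ∀ i, IsSumSq (x i)) {a : Fin d → ℕ}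
    (ha : ∑ i, a i ≤ d) : IsSumSq (symmetricMean x a - esymmMean x (∑ i, a i)) := by
  induction h : ∑ i, a i ^ 2 using Nat.strong_induction_on generalizing a with
  | _ s ih =>
  by_cases h01 : ∀ i, a i ≤ 1
  · have ha1 : a = fun i => if i ∈ ({i | a i = 1} : Finset _) then 1 else 0 := by
      funext i
      have := h01 i
      simp only [mem_filter, mem_univ, true_and]
      split_ifs <;> omega
    have hcard : #({i | a i = 1} : Finset (Fin d)) = ∑ i, a i := by
      rw [card_filter]
      exact sum_congr rfl fun i _ => by have := h01 i; split_ifs <;> omega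
    rw [ha1, symmetricMean_indicator, ← ha1, hcard, sub_self]
    exact .zero
  push Not at h01
  obtain ⟨i, hi⟩ := h01
  obtain ⟨c, hc⟩ : ∃ c, a i = c + 2 := ⟨a i - 2, by omega⟩
  obtain ⟨j, hj⟩ : ∃ j, a j = 0 := by
    by_contra! h0
    have : ∑ _l : Fin d, 1 < ∑ l, a l :=
      sum_lt_sum (fun l _ => Nat.one_le_iff_ne_zero.2 (h0 l)) ⟨i, mem_univ _, hi⟩
    simp only [sum_const, card_univ, Fintype.card_fin, smul_eq_mul, mul_one] at this
    omega
  have hij : i ≠ j := by rintro rfl; omega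
  set a' := Function.update (Function.update a i (c + 1)) j 1
  have hsplit (f : ℕ → ℕ) :
      ∑ l, f (a' l) + f (a i) + f (a j) = ∑ l, f (a l) + f (a' i) + f (a' j) := by
    rw [sum_univ_eq_add_add_sum_compl_pair hij (fun l => f (a' l)),
      sum_univ_eq_add_add_sum_compl_pair hij (fun l => f (a l)),
      sum_congr rfl fun l hl => ?_]
    · ring
    simp only [mem_compl, mem_insert, mem_singleton, not_or] at hl
    simp [a', hl.1, hl.2]
  have ha'i : a' i = c + 1 := by simp [a', hij]
  have ha'j : a' j = 1 := by simp [a']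
  have hsum : ∑ l, a' l = ∑ l, a l := by
    have := hsplit id
    simp only [id, ha'i, ha'j, hc, hj] at this
    omega
  have hsq : ∑ l, a' l ^ 2 < s := by
    have := hsplit (· ^ 2)
    simp only [ha'i, ha'j, hc, hj] at this
    nlinarith
  have := ih _ hsq (hsum ▸ ha) rfl
  rw [hsum] at this
  rw [← sub_add_sub_cancel _ (symmetricMean x a')]
  exact (isSumSq_symmetricMean_sub_update hx hij hc hj).add this

end Muirhead

section Maclaurin

variable {R : Type*} [CommRing R] [Algebra ℝ R] {d : ℕ}

theorem esymmMean_pow (x : Fin d → R) (k m : ℕ) :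
    esymmMean x k ^ m = ((d.choose k : ℝ) ^ m)⁻¹ •
      ∑ I ∈ Fintype.piFinset fun _ : Fin m => powersetCard k univ,
        symmetricMean x fun i => #{j | i ∈ I j} := by
  rw [← symmetrize_of_comp_perm (F := fun y => esymmMean y k ^ m)
    (fun σ y => by rw [esymmMean_comp_perm]) x]
  simp only [esymmMean, smul_pow]
  simp only [pow_sum_prod_eq_sum_prod_pow, symmetrize_smul, symmetrize_sum, inv_pow]
  rfl

theorem isSumSq_esymmMean_pow_sub {x : Fin d → R} (hx : ∀ i, IsSumSq (x i)) {k m : ℕ}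
    (hmk : m * k ≤ d) : IsSumSq (esymmMean x k ^ m - esymmMean x (m * k)) := by
  set P := Fintype.piFinset fun _ : Fin m => powersetCard k (univ : Finset (Fin d))
  have hcount : ∀ I ∈ P, ∑ i, #{j | i ∈ I j} = m * k := by
    intro I hI
    simp only [P, Fintype.mem_piFinset, mem_powersetCard_univ] at hI
    simp only [card_filter]
    rw [sum_comm]
    simp [hI]
  have hchoose : ((d.choose k : ℝ) ^ m) ≠ 0 := by
    rcases Nat.eq_zero_or_pos m with rfl | hm
    · simp
    · exact pow_ne_zero _ (Nat.cast_ne_zero.2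
        (Nat.choose_pos (le_trans (Nat.le_mul_of_pos_left k hm) hmk)).ne')
  have hmean : esymmMean x (m * k) = ((d.choose k : ℝ) ^ m)⁻¹ • ∑ _I ∈ P, esymmMean x (m * k) := by
    rw [sum_const, Fintype.card_piFinset, prod_const, card_powersetCard, card_univ,
      Fintype.card_fin, card_univ, Fintype.card_fin, ← Nat.cast_smul_eq_nsmul ℝ, smul_smul,
      Nat.cast_pow, inv_mul_cancel₀ hchoose, one_smul]
  rw [esymmMean_pow, hmean, ← smul_sub, ← sum_sub_distrib]
  refine .real_smul (by positivity) (.sum fun I hI => ?_)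
  have := isSumSq_symmetricMean_sub_esymmMean hx (a := fun i => #{j | i ∈ I j})
    (by rw [hcount I hI]; exact hmk)
  rwa [hcount I hI] at this

end Maclaurin

theorem isSOS_iff_isSumSq {n : ℕ} {p : MvPolynomial (Fin n) ℝ} : IsSOS p ↔ IsSumSq p := by
  refine ⟨fun ⟨m, f, hp⟩ => hp ▸ .sum_sq _ _, fun hp => ?_⟩
  induction hp with
  | zero => exact ⟨0, ![], by simp⟩
  | sq_add a _ ih =>
    obtain ⟨m, f, rfl⟩ := ih
    exact ⟨m + 1, Fin.cons a f, by simp [Fin.sum_univ_succ, sq]⟩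

theorem isSumSq_quadFormPoly {n : ℕ} {A : Matrix (Fin n) (Fin n) ℝ} (hA : A.PosSemidef) :
    IsSumSq (quadFormPoly n A) := by
  obtain ⟨m, v, rfl⟩ := posSemidef_iff_eq_sum_vecMulVec.mp hA
  have : quadFormPoly n (∑ r, vecMulVec (v r) (star (v r))) = ∑ r, (∑ a, C (v r a) * X a) ^ 2 := by
    simp only [quadFormPoly, sq, Matrix.sum_apply, vecMulVec_apply, star_trivial,
      map_sum, map_mul, sum_mul, mul_sum]
    rw [sum_congr rfl fun a _ => sum_comm, sum_comm]
    refine sum_congr rfl fun r _ => sum_congr rfl fun a _ => sum_congr rfl fun b _ => by ring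
  rw [this]
  exact .sum_sq _ _

theorem esymQuadPoly_eq_esymmMean (n d k : ℕ) (A : Fin d → Matrix (Fin n) (Fin n) ℝ) :
    esymQuadPoly n d k A = esymmMean (fun i => quadFormPoly n (A i)) k := by
  rw [esymQuadPoly, esymmMean, C_mul']

theorem isSOS_sub_esymQuadPoly_mul {n d k m : ℕ} (hmk : m * k ≤ d)
    {A : Fin d → Matrix (Fin n) (Fin n) ℝ} (hA : ∀ i, (A i).PosSemidef) {lam : ℝ} (hlam : 0 ≤ lam)
    (hsos : IsSOS (C lam * normSqPoly n ^ k - esymQuadPoly n d k A)) :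
    IsSOS (C (lam ^ m) * normSqPoly n ^ (m * k) - esymQuadPoly n d (m * k) A) := by
  rw [isSOS_iff_isSumSq] at hsos ⊢
  have hq i : IsSumSq (quadFormPoly n (A i)) := isSumSq_quadFormPoly (hA i)
  have hnorm : IsSumSq (C lam * normSqPoly n ^ k) :=
    (IsSumSq.algebraMap_real hlam).mul ((IsSumSq.sum_sq _ _).pow k)
  have hE : IsSumSq (esymQuadPoly n d k A) := by
    rw [esymQuadPoly_eq_esymmMean, esymmMean]
    exact .real_smul (by positivity) (.sum fun I _ => .prod fun i _ => hq i)
  have hpow := hnorm.pow_sub_pow hE hsos m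
  have hmac := isSumSq_esymmMean_pow_sub hq hmk
  rw [← esymQuadPoly_eq_esymmMean, ← esymQuadPoly_eq_esymmMean] at hmac
  have hX : (C lam * normSqPoly n ^ k) ^ m = C (lam ^ m) * normSqPoly n ^ (m * k) := by
    rw [mul_pow, ← pow_mul, C_pow, mul_comm k]
  rw [← sub_add_sub_cancel _ (esymQuadPoly n d k A ^ m), ← hX]
  exact hpow.add hmac

theorem sInf_rpow_inv_mul_le {S T : Set ℝ} {m : ℕ} (hm : m ≠ 0) (k : ℕ) (hS : S.Nonempty)
    (hS0 : ∀ x ∈ S, 0 ≤ x) (hT0 : ∀ y ∈ T, 0 ≤ y) (hST : ∀ x ∈ S, x ^ m ∈ T) :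
    sInf T ^ ((m * k : ℕ) : ℝ)⁻¹ ≤ sInf S ^ (k : ℝ)⁻¹ := by
  have hT : 0 ≤ sInf T := Real.sInf_nonneg hT0
  have hroot : sInf T ^ (m : ℝ)⁻¹ ≤ sInf S := by
    refine le_csInf hS fun x hx => ?_
    calc sInf T ^ (m : ℝ)⁻¹ ≤ (x ^ m) ^ (m : ℝ)⁻¹ :=
          Real.rpow_le_rpow hT (csInf_le ⟨0, hT0⟩ (hST x hx)) (by positivity)
      _ = x := Real.pow_rpow_inv_natCast (hS0 x hx) hm
  calc sInf T ^ ((m * k : ℕ) : ℝ)⁻¹ = (sInf T ^ (m : ℝ)⁻¹) ^ (k : ℝ)⁻¹ := by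
        rw [← Real.rpow_mul hT, Nat.cast_mul, mul_inv]
    _ ≤ sInf S ^ (k : ℝ)⁻¹ := Real.rpow_le_rpow (by positivity) hroot (by positivity)

theorem stmt_11_general (n d k m : ℕ) (hm : 1 ≤ m) (hmk : m * k ≤ d)
    (A : Fin d → Matrix (Fin n) (Fin n) ℝ) (hA : ∀ i, (A i).PosSemidef)
    (lam : ℝ) (hlam : 0 ≤ lam)
    (hsos : IsSOS (C lam * normSqPoly n ^ k - esymQuadPoly n d k A)) :
    IsSOS (C (lam ^ m) * normSqPoly n ^ (m * k) - esymQuadPoly n d (m * k) A) ∧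
    srel n d (m * k) A ≤ srel n d k A :=
  ⟨isSOS_sub_esymQuadPoly_mul hmk hA hlam hsos,
    sInf_rpow_inv_mul_le (by omega) k ⟨lam, hlam, hsos⟩ (fun _ h => h.1) (fun _ h => h.1)
      fun μ hμ => ⟨pow_nonneg hμ.1 m, isSOS_sub_esymQuadPoly_mul hmk hA hμ.1 hμ.2⟩⟩

/-- if `λ‖x‖^{2k} − E_k(q(x))` is SOS then so is
`λ^m ‖x‖^{2mk} − E_{mk}(q(x))`; consequently `srel_{mk}(A) ≤ srel_k(A)`. -/
theorem stmt_11 (n d k m : ℕ) (hk : 1 ≤ k) (hm : 1 ≤ m) (hmk : m * k ≤ d)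
    (A : Fin d → Matrix (Fin n) (Fin n) ℝ) (hA : ∀ i, (A i).PosSemidef)
    (lam : ℝ) (hlam : 0 ≤ lam)
    (hsos : IsSOS (C lam * normSqPoly n ^ k - esymQuadPoly n d k A)) :
    IsSOS (C (lam ^ m) * normSqPoly n ^ (m * k) - esymQuadPoly n d (m * k) A) ∧
    srel n d (m * k) A ≤ srel n d k A :=
  stmt_11_general n d k m hm hmk A hA lam hlam hsos
end

section
/- Let v_1, …, v_d ∈ ℝ^n be unit vectors and fix 1 ≤ k ≤ d. If λ ≥ 0 is such that λ‖x‖^{2k} − E_k(⟨v_1, x⟩^2, …, ⟨v_d, x⟩^2) is a sum of squares of real polynomials in x, then λ^{1/k} ≥ 1/(n + k − 1). Consequently the degree-k relaxation value OptSOS_k(A) of the instance A = (v_1 v_1^T, …, v_d v_d^T) satisfies OptSOS_k(A) ≥ 1/(n + k − 1). -/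
open MvPolynomial

/-- The linear form `x ↦ ⟨v, x⟩` as a polynomial. -/
noncomputable def linFormPoly (n : ℕ) (v : Fin n → ℝ) : MvPolynomial (Fin n) ℝ :=
  ∑ a, C (v a) * X a

/-- The normalized elementary symmetric polynomial
`E_k(⟨v₁,x⟩², …, ⟨v_d,x⟩²)`. -/
noncomputable def esymRankOnePoly (n d k : ℕ) (v : Fin d → Fin n → ℝ) :
    MvPolynomial (Fin n) ℝ :=
  C ((d.choose k : ℝ)⁻¹) *
    ∑ I ∈ Finset.powersetCard k (Finset.univ : Finset (Fin d)),
      ∏ i ∈ I, (linFormPoly n (v i)) ^ 2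

/-
Apply the Gaussian expectation `L p = 𝔼[p(g)]`, `g ∼ N(0, Iₙ)`, to the certificate. `L` is
nonnegative on squares and `L ‖x‖^{2k} = n (n + 2) ⋯ (n + 2k - 2)`. Expanding in Hermite
polynomials, `L (q²) ≥ ‖q‖_F² = ∑ α! q_α²` for homogeneous `q`; in the Fischer inner product,
multiplication by `⟨v, x⟩` is adjoint to `∂_v`, which gives `‖∏ᵢ ⟨vᵢ, x⟩‖_F² ≥ ∏ᵢ ‖vᵢ‖² = 1`.
Hence `0 ≤ L (λ ‖x‖^{2k} - E_k) ≤ λ ∏ⱼ (n + 2j) - 1`, and AM-GM bounds `(∏ⱼ (n + 2j))^{1/k}`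
by `n + k - 1`.
-/

open Finset
open scoped Nat

-- `𝔼[gᵗ]` for a standard Gaussian `g`: `(t - 1)‼` for even `t`, `0` for odd `t`.
noncomputable def gaussMoment : ℕ → ℝ
  | 0 => 1
  | 1 => 0
  | t + 2 => (t + 1) * gaussMoment t

theorem gaussMoment_succ : ∀ t : ℕ, gaussMoment (t + 1) = t * gaussMoment (t - 1)
  | 0 => by simp [gaussMoment]
  | t + 1 => by simp [gaussMoment]

-- `xᵃ = ∑_c hermiteCoeff a c • He_c(x)`, with `He_c` the probabilists' Hermite polynomials.
noncomputable def hermiteCoeff (a c : ℕ) : ℝ := a.choose c * gaussMoment (a - c)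

theorem hermiteCoeff_self (a : ℕ) : hermiteCoeff a a = 1 := by simp [hermiteCoeff, gaussMoment]

theorem hermiteCoeff_zero_right (a : ℕ) : hermiteCoeff a 0 = gaussMoment a := by
  simp [hermiteCoeff]

theorem hermiteCoeff_of_lt {a c : ℕ} (h : a < c) : hermiteCoeff a c = 0 := by
  simp [hermiteCoeff, Nat.choose_eq_zero_of_lt h]

theorem succ_mul_hermiteCoeff_succ (a c : ℕ) :
    (c + 1) * hermiteCoeff a (c + 1) = a * hermiteCoeff (a - 1) c := by
  rcases a with _ | a
  · simp [hermiteCoeff]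
  · have h : ((a + 1 : ℕ) : ℝ) * a.choose c = (a + 1).choose (c + 1) * (c + 1 : ℕ) := by
      exact_mod_cast Nat.add_one_mul_choose_eq a c
    simp only [hermiteCoeff, Nat.add_sub_cancel, Nat.add_sub_add_right]
    push_cast at h ⊢
    linear_combination (-gaussMoment (a - c)) * h

theorem hermiteCoeff_succ_succ (a c : ℕ) :
    hermiteCoeff (a + 1) (c + 1) = hermiteCoeff a c + a * hermiteCoeff (a - 1) (c + 1) := by
  simp only [hermiteCoeff, Nat.choose_succ_succ', Nat.cast_add, add_mul, Nat.add_sub_add_right]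
  congr 1
  rcases lt_or_ge a (c + 1) with h | h
  · simp [Nat.choose_eq_zero_of_lt h, Nat.choose_eq_zero_of_lt (h.trans_le' (Nat.sub_le a 1))]
  · obtain ⟨b, rfl⟩ : ∃ b, a = b + 1 := ⟨a - 1, by omega⟩
    have hchoose : (b.choose (c + 1) : ℝ) * (b + 1) = (b + 1).choose (c + 1) * (b - c) := by
      have := Nat.choose_mul_succ_eq b (c + 1)
      rw [Nat.add_sub_add_right] at this
      rw [← Nat.cast_sub (by omega : c ≤ b)]
      exact_mod_cast this
    rw [show b + 1 - c = (b - c) + 1 by omega, gaussMoment_succ, Nat.add_sub_cancel,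
      show b - (c + 1) = b - c - 1 by omega, Nat.cast_sub (by omega : c ≤ b)]
    push_cast
    linear_combination (-gaussMoment (b - c - 1)) * hchoose

theorem sum_factorial_mul_hermiteCoeff_succ (a b M : ℕ) :
    ∑ c ∈ range (M + 1), (c ! : ℝ) * hermiteCoeff (a + 1) c * hermiteCoeff b c =
      a * ∑ c ∈ range (M + 1), (c ! : ℝ) * hermiteCoeff (a - 1) c * hermiteCoeff b c +
        b * ∑ c ∈ range M, (c ! : ℝ) * hermiteCoeff a c * hermiteCoeff (b - 1) c := by
  have hterm : ∀ c, ((c + 1)! : ℝ) * hermiteCoeff (a + 1) (c + 1) * hermiteCoeff b (c + 1) =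
      a * (((c + 1)! : ℝ) * hermiteCoeff (a - 1) (c + 1) * hermiteCoeff b (c + 1)) +
        b * ((c ! : ℝ) * hermiteCoeff a c * hermiteCoeff (b - 1) c) := by
    intro c
    rw [hermiteCoeff_succ_succ, Nat.factorial_succ, Nat.cast_mul, Nat.cast_succ]
    linear_combination (c ! * hermiteCoeff a c) * succ_mul_hermiteCoeff_succ b c
  rw [sum_range_succ' _ M, sum_range_succ' _ M, sum_congr rfl fun c _ => hterm c,
    sum_add_distrib, mul_add, mul_sum, mul_sum]
  simp only [hermiteCoeff_zero_right, gaussMoment_succ]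
  ring

-- The orthogonality `𝔼[He_c He_c'] = c! δ_{cc'}`, expressed in the monomial basis.
theorem gaussMoment_add_eq_sum : ∀ a b N : ℕ, a < N →
    gaussMoment (a + b) = ∑ c ∈ range N, (c ! : ℝ) * hermiteCoeff a c * hermiteCoeff b c
  | 0, b, N, h => by
    rw [sum_eq_single_of_mem 0 (mem_range.2 h) fun c _ hc => by
      rw [hermiteCoeff_of_lt (Nat.pos_of_ne_zero hc), mul_zero, zero_mul]]
    simp [hermiteCoeff_zero_right, gaussMoment]
  | a + 1, b, 0, h => absurd h (by omega)
  | a + 1, b, M + 1, h => by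
    have e₁ : (a : ℝ) * gaussMoment (a - 1 + b) = a * gaussMoment (a + b - 1) := by
      rcases a with _ | a
      · simp
      · rw [show a + 1 - 1 + b = a + 1 + b - 1 by omega]
    have e₂ : (b : ℝ) * gaussMoment (a + (b - 1)) = b * gaussMoment (a + b - 1) := by
      rcases b with _ | b
      · simp
      · rw [show a + (b + 1 - 1) = a + (b + 1) - 1 by omega]
    rw [sum_factorial_mul_hermiteCoeff_succ, ← gaussMoment_add_eq_sum (a - 1) b (M + 1) (by omega),
      ← gaussMoment_add_eq_sum a (b - 1) M (by omega), add_right_comm, gaussMoment_succ, e₁, e₂]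
    push_cast
    ring

theorem prod_eq_mul_prod_compl_of_forall_ne {ι M : Type*} [Fintype ι] [DecidableEq ι]
    [CommMonoid M] {g h : ι → M} (j : ι) (hgh : ∀ i, i ≠ j → g i = h i) :
    ∏ i, g i = g j * ∏ i ∈ {j}ᶜ, h i := by
  rw [Fintype.prod_eq_mul_prod_compl j]
  exact congrArg _ (prod_congr rfl fun i hi => hgh i (by simpa using hi))

theorem lt_totalDegree_add_one_of_mem_support {σ : Type*} {q : MvPolynomial σ ℝ}
    {α : σ →₀ ℕ} (hα : α ∈ q.support) (i : σ) : α i < q.totalDegree + 1 :=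
  Nat.lt_succ_of_le ((Finsupp.le_degree i α).trans (le_totalDegree hα))

section

variable {σ : Type*} [Fintype σ]

theorem prod_single_add_apply [DecidableEq σ] {M : Type*} [CommMonoid M] (f : ℕ → M)
    (j : σ) (α : σ →₀ ℕ) :
    ∏ i, f ((Finsupp.single j 1 + α : σ →₀ ℕ) i) = f (α j + 1) * ∏ i ∈ {j}ᶜ, f (α i) := by
  rw [prod_eq_mul_prod_compl_of_forall_ne (h := fun i => f (α i)) j fun i hi => by
    simp [Ne.symm hi]]
  simp [add_comm]

noncomputable def mvGaussMoment (α : σ →₀ ℕ) : ℝ := ∏ i, gaussMoment (α i)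

-- The expectation `p ↦ 𝔼[p(g)]` for a standard Gaussian vector `g`.
noncomputable def gaussExpect : MvPolynomial σ ℝ →ₗ[ℝ] ℝ :=
  Finsupp.linearCombination ℝ mvGaussMoment ∘ₗ
    (AddMonoidAlgebra.coeffLinearEquiv ℝ).toLinearMap

theorem gaussExpect_monomial (α : σ →₀ ℕ) (r : ℝ) :
    gaussExpect (monomial α r) = r * mvGaussMoment α :=
  Finsupp.linearCombination_single ℝ r α

theorem mvGaussMoment_single_add (j : σ) (α : σ →₀ ℕ) :
    mvGaussMoment (Finsupp.single j 1 + α) =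
      α j * mvGaussMoment (α - Finsupp.single j 1) := by
  classical
  rw [mvGaussMoment, mvGaussMoment, prod_single_add_apply, gaussMoment_succ,
    prod_eq_mul_prod_compl_of_forall_ne (h := fun i => gaussMoment (α i)) j fun i hi => by
      simp [Ne.symm hi]]
  simp [mul_assoc]

-- Gaussian integration by parts (Stein's lemma).
theorem gaussExpect_X_mul (j : σ) (p : MvPolynomial σ ℝ) :
    gaussExpect (X j * p) = gaussExpect (pderiv j p) := by
  induction p using MvPolynomial.induction_on' with
  | monomial α r =>
    rw [X, monomial_mul, pderiv_monomial, gaussExpect_monomial, gaussExpect_monomial,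
      mvGaussMoment_single_add, one_mul, mul_assoc]
  | add p q hp hq => rw [mul_add, map_add, map_add, hp, hq, map_add]

-- The coefficient of `He_c(x) = ∏ᵢ He_{cᵢ}(xᵢ)` in `q`.
noncomputable def mvHermiteCoeff (q : MvPolynomial σ ℝ) (c : σ → ℕ) : ℝ :=
  ∑ α ∈ q.support, coeff α q * ∏ i, hermiteCoeff (α i) (c i)

theorem mvGaussMoment_add_eq_sum [DecidableEq σ] {N : ℕ} (α β : σ →₀ ℕ)
    (hα : ∀ i, α i < N) :
    mvGaussMoment (α + β) = ∑ c ∈ Fintype.piFinset fun _ => range N,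
      (∏ i, ((c i)! : ℝ)) * (∏ i, hermiteCoeff (α i) (c i)) *
        ∏ i, hermiteCoeff (β i) (c i) := by
  rw [mvGaussMoment]
  simp only [Finsupp.add_apply]
  rw [prod_congr rfl fun i _ => gaussMoment_add_eq_sum (α i) (β i) N (hα i), prod_univ_sum]
  exact sum_congr rfl fun c _ => by rw [prod_mul_distrib, prod_mul_distrib]

theorem gaussExpect_mul_eq_sum [DecidableEq σ] {N : ℕ} (p q : MvPolynomial σ ℝ)
    (hp : ∀ α ∈ p.support, ∀ i, α i < N) :
    gaussExpect (p * q) = ∑ c ∈ Fintype.piFinset fun _ => range N,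
      (∏ i, ((c i)! : ℝ)) * mvHermiteCoeff p c * mvHermiteCoeff q c := by
  have hpq : gaussExpect (p * q) =
      ∑ α ∈ p.support, ∑ β ∈ q.support, coeff α p * coeff β q * mvGaussMoment (α + β) := by
    conv_lhs => rw [p.as_sum, q.as_sum]
    simp only [sum_mul_sum, monomial_mul, map_sum, gaussExpect_monomial]
  calc gaussExpect (p * q)
      = ∑ α ∈ p.support, ∑ β ∈ q.support, ∑ c ∈ Fintype.piFinset fun _ => range N,
          (∏ i, ((c i)! : ℝ)) * (coeff α p * ∏ i, hermiteCoeff (α i) (c i)) *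
            (coeff β q * ∏ i, hermiteCoeff (β i) (c i)) := by
        refine hpq.trans (sum_congr rfl fun α hα => sum_congr rfl fun β _ => ?_)
        rw [mvGaussMoment_add_eq_sum α β (hp α hα), mul_sum]
        exact sum_congr rfl fun c _ => by ring
    _ = ∑ c ∈ Fintype.piFinset fun _ => range N, ∑ α ∈ p.support, ∑ β ∈ q.support,
          (∏ i, ((c i)! : ℝ)) * (coeff α p * ∏ i, hermiteCoeff (α i) (c i)) *
            (coeff β q * ∏ i, hermiteCoeff (β i) (c i)) := by
        exact (sum_congr rfl fun α _ => sum_comm).trans sum_comm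
    _ = _ := by
        refine sum_congr rfl fun c _ => ?_
        rw [mvHermiteCoeff, mvHermiteCoeff, mul_assoc, sum_mul_sum, mul_sum]
        refine sum_congr rfl fun α _ => ?_
        rw [mul_sum]
        exact sum_congr rfl fun β _ => by ring

theorem gaussExpect_mul_self_nonneg (q : MvPolynomial σ ℝ) : 0 ≤ gaussExpect (q * q) := by
  classical
  rw [gaussExpect_mul_eq_sum q q fun α hα => lt_totalDegree_add_one_of_mem_support hα]
  exact sum_nonneg fun c _ => by
    rw [mul_assoc]
    exact mul_nonneg (by positivity) (mul_self_nonneg _)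

theorem prod_hermiteCoeff_eq_zero {α β : σ →₀ ℕ} (hdeg : α.degree = β.degree)
    (hne : α ≠ β) :
    ∏ i, hermiteCoeff (α i) (β i) = 0 := by
  obtain ⟨i, hi⟩ : ∃ i, α i < β i := by
    by_contra! h
    rw [Finsupp.degree_eq_sum, Finsupp.degree_eq_sum] at hdeg
    have := (sum_eq_sum_iff_of_le fun i _ => h i).mp hdeg.symm
    exact hne (Finsupp.ext fun i => (this i (mem_univ i)).symm)
  exact prod_eq_zero (mem_univ i) (hermiteCoeff_of_lt hi)

theorem mvHermiteCoeff_eq_coeff {k : ℕ} {q : MvPolynomial σ ℝ} (hq : q.IsHomogeneous k)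
    {β : σ →₀ ℕ} (hβ : β.degree = k) : mvHermiteCoeff q β = coeff β q := by
  rw [mvHermiteCoeff, sum_eq_single β]
  · simp [hermiteCoeff_self]
  · intro α hα hne
    have hdeg : α.degree = k := (hq.degree_eq_sum_deg_support hα).symm
    rw [prod_hermiteCoeff_eq_zero (hdeg.trans hβ.symm) hne, mul_zero]
  · intro hβ
    rw [notMem_support_iff.mp hβ, zero_mul]

-- The Fischer inner product, `⟨x^α, x^β⟩ = α! δ_{αβ}`.
noncomputable def fischer : MvPolynomial σ ℝ →ₗ[ℝ] MvPolynomial σ ℝ →ₗ[ℝ] ℝ :=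
  Finsupp.linearCombination ℝ (fun α => (∏ i, ((α i)! : ℝ)) • lcoeff ℝ α) ∘ₗ
    (AddMonoidAlgebra.coeffLinearEquiv ℝ).toLinearMap

theorem fischer_apply (p q : MvPolynomial σ ℝ) :
    fischer p q = ∑ α ∈ p.support, coeff α p * coeff α q * ∏ i, ((α i)! : ℝ) := by
  have h : fischer p = ∑ α ∈ p.support, coeff α p • (∏ i, ((α i)! : ℝ)) • lcoeff ℝ α :=
    Finsupp.linearCombination_apply ℝ _
  simp only [h, LinearMap.sum_apply, LinearMap.smul_apply, lcoeff_apply, smul_eq_mul]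
  exact sum_congr rfl fun α _ => by ring

theorem fischer_monomial (α : σ →₀ ℕ) (r : ℝ) (q : MvPolynomial σ ℝ) :
    fischer (monomial α r) q = r * coeff α q * ∏ i, ((α i)! : ℝ) := by
  have h : fischer (monomial α r) = r • (∏ i, ((α i)! : ℝ)) • lcoeff ℝ α :=
    Finsupp.linearCombination_single ℝ _ _
  simp only [h, LinearMap.smul_apply, lcoeff_apply, smul_eq_mul]
  ring

theorem fischer_comm (p q : MvPolynomial σ ℝ) : fischer p q = fischer q p := by
  have key : ∀ p q : MvPolynomial σ ℝ, fischer p q =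
      ∑ α ∈ p.support ∪ q.support, coeff α p * coeff α q * ∏ i, ((α i)! : ℝ) := fun p q => by
    rw [fischer_apply]
    exact sum_subset subset_union_left fun α _ hα => by simp [notMem_support_iff.mp hα]
  rw [key, key, union_comm]
  exact sum_congr rfl fun α _ => by ring

theorem fischer_self_nonneg (p : MvPolynomial σ ℝ) : 0 ≤ fischer p p := by
  rw [fischer_apply]
  exact sum_nonneg fun α _ => mul_nonneg (mul_self_nonneg _) (by positivity)

theorem fischer_X_mul (j : σ) (p q : MvPolynomial σ ℝ) :
    fischer (X j * p) q = fischer p (pderiv j q) := by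
  classical
  induction p using MvPolynomial.induction_on' with
  | monomial α r =>
    rw [X, monomial_mul, one_mul, fischer_monomial, fischer_monomial, coeff_pderiv,
      prod_single_add_apply (fun k => (k ! : ℝ)), Fintype.prod_eq_mul_prod_compl j,
      add_comm α, Nat.factorial_succ]
    push_cast
    ring
  | add p₁ p₂ h₁ h₂ =>
    rw [mul_add, map_add, map_add, LinearMap.add_apply, LinearMap.add_apply, h₁, h₂]

theorem fischer_one : fischer (1 : MvPolynomial σ ℝ) 1 = 1 := by
  rw [← C_1, C_apply, fischer_monomial]
  simp

-- `𝔼[q²] = ∑_c c! (Hermite coefficients)²`, and for homogeneous `q` the terms with `|c| = deg q`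
-- already add up to the Fischer norm: there the Hermite coefficients are the ordinary ones.
theorem fischer_self_le_gaussExpect_mul_self {k : ℕ} {q : MvPolynomial σ ℝ}
    (hq : q.IsHomogeneous k) : fischer q q ≤ gaussExpect (q * q) := by
  classical
  rw [gaussExpect_mul_eq_sum q q fun α hα => lt_totalDegree_add_one_of_mem_support hα,
    fischer_apply]
  have hsub : q.support.image (⇑) ⊆ Fintype.piFinset fun _ => range (q.totalDegree + 1) := by
    simp only [subset_iff, mem_image, Fintype.mem_piFinset, mem_range]
    rintro _ ⟨α, hα, rfl⟩ i
    exact lt_totalDegree_add_one_of_mem_support hα i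
  refine le_of_eq_of_le ?_ (sum_le_sum_of_subset_of_nonneg hsub fun c _ _ => by
    rw [mul_assoc]; exact mul_nonneg (by positivity) (mul_self_nonneg _))
  rw [sum_image fun α _ β _ h => DFunLike.coe_injective h]
  refine sum_congr rfl fun α hα => ?_
  rw [mvHermiteCoeff_eq_coeff hq (hq.degree_eq_sum_deg_support hα).symm]
  ring

noncomputable def dirDeriv (v : σ → ℝ) :
    Derivation ℝ (MvPolynomial σ ℝ) (MvPolynomial σ ℝ) :=
  ∑ i, v i • pderiv i

theorem dirDeriv_apply (v : σ → ℝ) (q : MvPolynomial σ ℝ) :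
    dirDeriv v q = ∑ i, v i • pderiv i q := by
  change Derivation.coeFnAddMonoidHom (∑ i, v i • pderiv i) q = _
  simp [map_sum, Derivation.coeFnAddMonoidHom_apply]

end

variable {n : ℕ}

theorem isHomogeneous_normSqPoly : (normSqPoly n).IsHomogeneous 2 :=
  IsHomogeneous.sum _ _ _ fun j _ => isHomogeneous_X_pow j 2

theorem gaussExpect_normSqPoly_mul {m : ℕ} {p : MvPolynomial (Fin n) ℝ}
    (hp : p.IsHomogeneous m) : gaussExpect (normSqPoly n * p) = (n + m) * gaussExpect p := by
  have hXX : ∀ j,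
      gaussExpect (X j ^ 2 * p) = gaussExpect p + gaussExpect (X j * pderiv j p) := by
    intro j
    rw [sq, mul_assoc, gaussExpect_X_mul, pderiv_mul, pderiv_X_self, one_mul, map_add]
  rw [normSqPoly, sum_mul, map_sum, sum_congr rfl fun j _ => hXX j, sum_add_distrib,
    ← map_sum gaussExpect (fun j => X j * pderiv j p), hp.sum_X_mul_pderiv, sum_const, card_univ,
    Fintype.card_fin, map_nsmul, nsmul_eq_mul, nsmul_eq_mul]
  ring

theorem gaussExpect_normSqPoly_pow (k : ℕ) :
    gaussExpect (normSqPoly n ^ k) = ∏ j ∈ range k, ((n : ℝ) + 2 * j) := by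
  induction k with
  | zero =>
    rw [pow_zero, ← C_1, C_apply, gaussExpect_monomial]
    simp [mvGaussMoment, gaussMoment]
  | succ k ih =>
    rw [pow_succ', gaussExpect_normSqPoly_mul (isHomogeneous_normSqPoly.pow k), ih,
      prod_range_succ]
    push_cast
    ring

theorem isHomogeneous_linFormPoly (v : Fin n → ℝ) : (linFormPoly n v).IsHomogeneous 1 :=
  IsHomogeneous.sum _ _ _ fun a _ => by
    simpa using (isHomogeneous_C (Fin n) (v a)).mul (isHomogeneous_X ℝ a)

theorem fischer_linFormPoly_mul (v : Fin n → ℝ) (p q : MvPolynomial (Fin n) ℝ) :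
    fischer (linFormPoly n v * p) q = fischer p (dirDeriv v q) := by
  simp only [linFormPoly, sum_mul, map_sum, LinearMap.sum_apply, dirDeriv_apply]
  refine sum_congr rfl fun i _ => ?_
  rw [mul_assoc, ← smul_eq_C_mul, map_smul, LinearMap.smul_apply, fischer_X_mul, map_smul]

theorem dirDeriv_linFormPoly (v w : Fin n → ℝ) :
    dirDeriv v (linFormPoly n w) = C (∑ i, v i * w i) := by
  simp [dirDeriv_apply, linFormPoly, pderiv_X, Pi.single_apply, smul_eq_C_mul, mul_comm]

theorem fischer_linFormPoly_mul_self (v : Fin n → ℝ) (p : MvPolynomial (Fin n) ℝ) :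
    fischer (linFormPoly n v * p) (linFormPoly n v * p) =
      (∑ i, v i ^ 2) * fischer p p + fischer (dirDeriv v p) (dirDeriv v p) := by
  rw [fischer_linFormPoly_mul, Derivation.leibniz, dirDeriv_linFormPoly, smul_eq_mul, smul_eq_mul,
    map_add, fischer_comm p (linFormPoly n v * _), fischer_linFormPoly_mul, mul_comm p,
    ← smul_eq_C_mul, map_smul, smul_eq_mul]
  simp only [sq, add_comm]

theorem prod_sum_sq_le_fischer_prod_linFormPoly {ι : Type*} (w : ι → Fin n → ℝ)
    (I : Finset ι) :
    ∏ i ∈ I, ∑ j, w i j ^ 2 ≤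
      fischer (∏ i ∈ I, linFormPoly n (w i)) (∏ i ∈ I, linFormPoly n (w i)) := by
  classical
  induction I using Finset.induction_on with
  | empty => simp [fischer_one]
  | insert a I ha ih =>
    rw [prod_insert ha, prod_insert ha, fischer_linFormPoly_mul_self]
    have := fischer_self_nonneg (dirDeriv (w a) (∏ i ∈ I, linFormPoly n (w i)))
    have : 0 ≤ ∑ j, w a j ^ 2 := by positivity
    nlinarith

theorem prod_sum_sq_le_gaussExpect_prod_linFormPoly_sq {ι : Type*} (v : ι → Fin n → ℝ)
    (I : Finset ι) :
    ∏ i ∈ I, ∑ j, v i j ^ 2 ≤ gaussExpect (∏ i ∈ I, linFormPoly n (v i) ^ 2) := by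
  have hhom : (∏ i ∈ I, linFormPoly n (v i)).IsHomogeneous (∑ _i ∈ I, 1) :=
    IsHomogeneous.prod I _ _ fun i _ => isHomogeneous_linFormPoly (v i)
  calc ∏ i ∈ I, ∑ j, v i j ^ 2
      ≤ fischer (∏ i ∈ I, linFormPoly n (v i)) (∏ i ∈ I, linFormPoly n (v i)) :=
        prod_sum_sq_le_fischer_prod_linFormPoly v I
    _ ≤ gaussExpect ((∏ i ∈ I, linFormPoly n (v i)) * ∏ i ∈ I, linFormPoly n (v i)) :=
        fischer_self_le_gaussExpect_mul_self hhom
    _ = gaussExpect (∏ i ∈ I, linFormPoly n (v i) ^ 2) := by simp only [← prod_mul_distrib, sq]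

theorem one_le_gaussExpect_esymRankOnePoly {d k : ℕ} (hkd : k ≤ d) (v : Fin d → Fin n → ℝ)
    (hv : ∀ i, ∑ j, v i j ^ 2 = 1) : 1 ≤ gaussExpect (esymRankOnePoly n d k v) := by
  have hsum : (d.choose k : ℝ) ≤
      ∑ I ∈ powersetCard k univ, gaussExpect (∏ i ∈ I, linFormPoly n (v i) ^ 2) := by
    simpa using card_nsmul_le_sum (powersetCard k univ)
      (fun I => gaussExpect (∏ i ∈ I, linFormPoly n (v i) ^ 2)) (1 : ℝ) fun I _ => by
      simpa [hv] using prod_sum_sq_le_gaussExpect_prod_linFormPoly_sq v I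
  have hpos : (0 : ℝ) < d.choose k := by exact_mod_cast Nat.choose_pos hkd
  rw [esymRankOnePoly, ← smul_eq_C_mul, map_smul, map_sum, smul_eq_mul, le_inv_mul_iff₀ hpos,
    mul_one]
  exact hsum

theorem gaussExpect_nonneg_of_isSOS {p : MvPolynomial (Fin n) ℝ} (hp : IsSOS p) :
    0 ≤ gaussExpect p := by
  obtain ⟨m, f, rfl⟩ := hp
  rw [map_sum]
  exact sum_nonneg fun j _ => by rw [sq]; exact gaussExpect_mul_self_nonneg (f j)

theorem one_le_mul_prod_of_isSOS {d k : ℕ} (hkd : k ≤ d) {v : Fin d → Fin n → ℝ}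
    (hv : ∀ i, ∑ j, v i j ^ 2 = 1) {l : ℝ}
    (hsos : IsSOS (C l * normSqPoly n ^ k - esymRankOnePoly n d k v)) :
    1 ≤ l * ∏ j ∈ range k, ((n : ℝ) + 2 * j) := by
  have h := gaussExpect_nonneg_of_isSOS hsos
  rw [map_sub, ← smul_eq_C_mul, map_smul, gaussExpect_normSqPoly_pow, smul_eq_mul] at h
  linarith [one_le_gaussExpect_esymRankOnePoly hkd v hv]

theorem prod_add_two_mul_rpow_inv_le {k : ℕ} (hk : k ≠ 0) (n : ℕ) :
    (∏ j ∈ range k, ((n : ℝ) + 2 * j)) ^ (k : ℝ)⁻¹ ≤ n + k - 1 := by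
  have hsum : ∀ k : ℕ, ∑ j ∈ range k, ((n : ℝ) + 2 * j) = k * (n + k - 1) := by
    intro k
    induction k with
    | zero => simp
    | succ k ih => rw [sum_range_succ, ih]; push_cast; ring
  have hk' : (0 : ℝ) < k := by positivity
  have := Real.geom_mean_le_arith_mean (range k) (fun _ => 1) (fun j => (n : ℝ) + 2 * j)
    (fun _ _ => zero_le_one) (by simpa using hk') (fun _ _ => by positivity)
  simp only [Real.rpow_one, sum_const, card_range, nsmul_eq_mul, mul_one, one_mul, hsum] at this
  rwa [mul_div_cancel_left₀ _ hk'.ne'] at this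

theorem one_div_le_rpow_inv_of_one_le_mul_prod {n k : ℕ} (hk : k ≠ 0) {x : ℝ}
    (hx : 1 ≤ x * ∏ j ∈ range k, ((n : ℝ) + 2 * j)) :
    1 / ((n : ℝ) + k - 1) ≤ x ^ (k : ℝ)⁻¹ := by
  set P := ∏ j ∈ range k, ((n : ℝ) + 2 * j)
  have hx₀ : 0 < x :=
    pos_of_mul_pos_left (one_pos.trans_le hx) (prod_nonneg fun j _ => by positivity)
  have hP : 0 < P := pos_of_mul_pos_right (one_pos.trans_le hx) hx₀.le
  have hroot : 0 < P ^ (k : ℝ)⁻¹ := Real.rpow_pos_of_pos hP _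
  calc 1 / ((n : ℝ) + k - 1) ≤ 1 / P ^ (k : ℝ)⁻¹ :=
        one_div_le_one_div_of_le hroot (prod_add_two_mul_rpow_inv_le hk n)
    _ = (1 / P) ^ (k : ℝ)⁻¹ := by rw [one_div, one_div, Real.inv_rpow hP.le]
    _ ≤ x ^ (k : ℝ)⁻¹ :=
        Real.rpow_le_rpow (by positivity) ((div_le_iff₀ hP).2 (by linarith)) (by positivity)

theorem stmt_14_general (n d k : ℕ) (hk : 1 ≤ k) (hkd : k ≤ d)
    (v : Fin d → EuclideanSpace ℝ (Fin n)) (hv : ∀ i, ‖v i‖ = 1)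
    (lam : ℝ)
    (hsos : IsSOS (C lam * normSqPoly n ^ k - esymRankOnePoly n d k (fun i => v i))) :
    lam ^ ((k : ℝ)⁻¹) ≥ 1 / ((n : ℝ) + k - 1) ∧
    (sInf {l : ℝ | 0 ≤ l ∧
        IsSOS (C l * normSqPoly n ^ k - esymRankOnePoly n d k (fun i => v i))})
        ^ ((k : ℝ)⁻¹) ≥ 1 / ((n : ℝ) + k - 1) := by
  have hk₀ : k ≠ 0 := by omega
  have hunit : ∀ i, ∑ j, v i j ^ 2 = 1 := fun i => by
    rw [← EuclideanSpace.real_norm_sq_eq, hv i, one_pow]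
  have hbound : ∀ l, IsSOS (C l * normSqPoly n ^ k - esymRankOnePoly n d k (fun i => v i)) →
      1 ≤ l * ∏ j ∈ range k, ((n : ℝ) + 2 * j) := fun l => one_le_mul_prod_of_isSOS hkd hunit
  have hlam := hbound lam hsos
  have hlam₀ : 0 < lam :=
    pos_of_mul_pos_left (one_pos.trans_le hlam) (prod_nonneg fun j _ => by positivity)
  have hP : 0 < ∏ j ∈ range k, ((n : ℝ) + 2 * j) :=
    pos_of_mul_pos_right (one_pos.trans_le hlam) hlam₀.le
  refine ⟨one_div_le_rpow_inv_of_one_le_mul_prod hk₀ hlam,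
    one_div_le_rpow_inv_of_one_le_mul_prod hk₀ ?_⟩
  rw [← div_le_iff₀ hP]
  exact le_csInf ⟨lam, hlam₀.le, hsos⟩ fun l hl => (div_le_iff₀ hP).2 (hbound l hl.2)

/-- any SOS certificate `λ` for the degree-`k` relaxation of a
rank-one instance satisfies `λ^{1/k} ≥ 1/(n+k−1)`; consequently
`OptSOS_k(A) ≥ 1/(n+k−1)`. -/
theorem stmt_14 (n d k : ℕ) (hk : 1 ≤ k) (hkd : k ≤ d)
    (v : Fin d → EuclideanSpace ℝ (Fin n)) (hv : ∀ i, ‖v i‖ = 1)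
    (lam : ℝ) (hlam : 0 ≤ lam)
    (hsos : IsSOS (C lam * normSqPoly n ^ k - esymRankOnePoly n d k (fun i => v i))) :
    lam ^ ((k : ℝ)⁻¹) ≥ 1 / ((n : ℝ) + k - 1) ∧
    (sInf {l : ℝ | 0 ≤ l ∧
        IsSOS (C l * normSqPoly n ^ k - esymRankOnePoly n d k (fun i => v i))})
        ^ ((k : ℝ)⁻¹) ≥ 1 / ((n : ℝ) + k - 1) :=
  stmt_14_general n d k hk hkd v hv lam hsos
end

section
/- Let G be a simple 3-regular graph on n vertices, Q_G = (1/2)(I_n − A_G/3), k a positive integer, and p_G(x) = x^T Q_G x · ∏_{i=1}^n (n x_i^2)^k. For any δ with (2 log 2)/k ≤ δ < n, set η = n/√(n + δ). Then for every x ∈ ℝ^n with ‖x‖_2 = 1 and ‖x‖_1 ≤ η, one has p_G(x) ≤ MaxCut(G). Consequently, with T_δ = { x ∈ ℝ^n : ‖x‖_2 = 1, ‖x‖_1 ≥ η }, the maximum of p_G over the unit sphere equals its maximum over T_δ. -/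
/-!
For a 3-regular graph `xᵀ A_G x ≥ -3 ‖x‖²`, so `xᵀ Q_G x ≤ 1` on the unit sphere, while
averaging `xᵀ Q_G x` over the `2ⁿ` sign vectors gives `tr Q_G / n = 1/2`, so `MaxCut(G) ≥ 1/2`.
By AM-GM, `∏ n xᵢ² ≤ (‖x‖₁² / n)ⁿ`, which for `‖x‖₁ ≤ η` is at most `(n / (n + δ))ⁿ`; since
`log (1 + δ/n) ≥ δ / (2n)` for `δ < n`, the lower bound on `δ` gives `(n / (n + δ))^(nk) ≤ 1/2`.
Hence `p_G ≤ 1/2 ≤ MaxCut(G)` when `‖x‖₁ ≤ η`. The cube points `±1/√n` have `‖x‖₁ = √n ≥ η`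
and `p_G(x) = xᵀ Q_G x`, so the supremum over `T_δ` is at least `MaxCut(G)`, which bounds `p_G`
off `T_δ`.
-/

open Matrix

/-- `Q_G = (1/2)(I − A_G/3)` for a 3-regular graph `G`. -/
noncomputable def QG (n : ℕ) (G : SimpleGraph (Fin n)) [DecidableRel G.Adj] :
    Matrix (Fin n) (Fin n) ℝ :=
  (2 : ℝ)⁻¹ • ((1 : Matrix (Fin n) (Fin n) ℝ) - (3 : ℝ)⁻¹ • G.adjMatrix ℝ)

/-- `MaxCut(G) = max_{x ∈ {±1/√n}ⁿ} xᵀ Q_G x`. -/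
noncomputable def maxCutVal (n : ℕ) (G : SimpleGraph (Fin n)) [DecidableRel G.Adj] : ℝ :=
  sSup {w : ℝ | ∃ x : Fin n → ℝ,
    (∀ i, x i = 1 / Real.sqrt n ∨ x i = -(1 / Real.sqrt n)) ∧
    w = x ⬝ᵥ (QG n G).mulVec x}

/-- `p_G(x) = xᵀ Q_G x · ∏ᵢ (n xᵢ²)^k`. -/
noncomputable def pG (n : ℕ) (G : SimpleGraph (Fin n)) [DecidableRel G.Adj]
    (k : ℕ) (x : EuclideanSpace ℝ (Fin n)) : ℝ :=
  (x ⬝ᵥ (QG n G).mulVec x) * ∏ i, ((n : ℝ) * (x i) ^ 2) ^ k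

open Finset

lemma prod_le_sum_div_card_pow {ι : Type*} [Fintype ι] (z : ι → ℝ) (hz : ∀ i, 0 ≤ z i) :
    ∏ i, z i ≤ ((∑ i, z i) / Fintype.card ι) ^ Fintype.card ι := by
  cases isEmpty_or_nonempty ι
  · simp
  have hcard : (0 : ℝ) < Fintype.card ι := by exact_mod_cast Fintype.card_pos
  have hamgm := Real.geom_mean_le_arith_mean univ (fun _ => (1 : ℝ)) z (fun _ _ => zero_le_one)
    (by simpa using hcard) (fun i _ => hz i)
  simp only [Real.rpow_one, sum_const, card_univ, nsmul_eq_mul, mul_one, one_mul] at hamgm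
  have hprod : 0 ≤ ∏ i, z i := prod_nonneg fun i _ => hz i
  calc ∏ i, z i = ((∏ i, z i) ^ (Fintype.card ι : ℝ)⁻¹) ^ Fintype.card ι := by
        rw [← Real.rpow_natCast, ← Real.rpow_mul hprod, inv_mul_cancel₀ hcard.ne', Real.rpow_one]
    _ ≤ ((∑ i, z i) / Fintype.card ι) ^ Fintype.card ι := by gcongr

section ProductBounds

variable {ι : Type*} [Fintype ι]

lemma prod_card_mul_sq_le_sum_sq_pow (x : ι → ℝ) :
    ∏ i, ((Fintype.card ι : ℝ) * x i ^ 2) ≤ (∑ i, x i ^ 2) ^ Fintype.card ι := by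
  cases isEmpty_or_nonempty ι
  · simp
  have hcard : (Fintype.card ι : ℝ) ≠ 0 := by positivity
  refine (prod_le_sum_div_card_pow _ fun i => by positivity).trans_eq ?_
  rw [← mul_sum, mul_div_cancel_left₀ _ hcard]

lemma prod_card_mul_sq_le_sq_sum_abs_div_card_pow (x : ι → ℝ) :
    ∏ i, ((Fintype.card ι : ℝ) * x i ^ 2) ≤
      ((∑ i, |x i|) ^ 2 / Fintype.card ι) ^ Fintype.card ι := by
  cases isEmpty_or_nonempty ι
  · simp
  have hcard : (Fintype.card ι : ℝ) ≠ 0 := by positivity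
  have hamgm := pow_le_pow_left₀ (prod_nonneg fun i _ => abs_nonneg (x i))
    (prod_le_sum_div_card_pow _ fun i => abs_nonneg (x i)) 2
  calc ∏ i, ((Fintype.card ι : ℝ) * x i ^ 2)
        = (Fintype.card ι : ℝ) ^ Fintype.card ι * (∏ i, |x i|) ^ 2 := by
        simp_rw [prod_mul_distrib, prod_const, card_univ, ← sq_abs (x _), prod_pow]
    _ ≤ (Fintype.card ι : ℝ) ^ Fintype.card ι *
          (((∑ i, |x i|) / Fintype.card ι) ^ Fintype.card ι) ^ 2 := by gcongr
    _ = ((∑ i, |x i|) ^ 2 / Fintype.card ι) ^ Fintype.card ι := by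
        rw [← pow_mul, mul_comm _ 2, pow_mul, ← mul_pow]
        field_simp

end ProductBounds

lemma div_add_pow_mul_le_half {n k : ℕ} (hn : 0 < n) (hk : 0 < k) {δ : ℝ}
    (hδl : 2 * Real.log 2 / k ≤ δ) (hδu : δ < n) :
    ((n : ℝ) / (n + δ)) ^ (n * k) ≤ 1 / 2 := by
  have hN : (0 : ℝ) < n := by exact_mod_cast hn
  have hK : (0 : ℝ) < k := by exact_mod_cast hk
  have hδ : 0 < δ := lt_of_lt_of_le (by positivity) hδl
  have hlog : δ / (2 * n) ≤ Real.log ((n + δ) / n) := by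
    calc δ / (2 * n) ≤ δ / (n + δ) := by gcongr; linarith
      _ = 1 - ((n + δ) / n)⁻¹ := by field_simp; ring
      _ ≤ Real.log ((n + δ) / n) := Real.one_sub_inv_le_log_of_pos (by positivity)
  have htwo : Real.log 2 ≤ Real.log (((n + δ) / n) ^ (n * k)) := by
    rw [Real.log_pow]
    rw [div_le_iff₀ hK] at hδl
    calc Real.log 2 ≤ (n * k : ℝ) * (δ / (2 * n)) := by field_simp; linarith
      _ ≤ _ := by push_cast; gcongr
  rw [Real.log_le_log_iff (by norm_num) (by positivity)] at htwo
  rw [← inv_div, inv_pow, one_div]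
  exact inv_anti₀ (by norm_num) htwo

lemma csSup_eq_csSup_of_forall_mem_diff_le {α : Type*} [ConditionallyCompleteLattice α]
    {S T : Set α} (hS : BddAbove S) (hT : T.Nonempty) (hTS : T ⊆ S)
    (hdiff : ∀ w ∈ S \ T, w ≤ sSup T) : sSup S = sSup T := by
  refine le_antisymm (csSup_le (hT.mono hTS) fun w hw => ?_) (csSup_le_csSup hS hT hTS)
  by_cases hwT : w ∈ T
  · exact le_csSup (hS.mono hTS) hwT
  · exact hdiff w ⟨hw, hwT⟩

lemma div_sqrt_add_le_sqrt {a δ : ℝ} (ha : 0 < a) (hδ : 0 ≤ δ) : a / √(a + δ) ≤ √a := by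
  calc a / √(a + δ) ≤ a / √a := by gcongr; linarith
    _ = √a := Real.div_sqrt

section RegularGraph

variable {V : Type*} [Fintype V] {G : SimpleGraph V} [DecidableRel G.Adj] {d : ℕ}

lemma sum_sum_ite_adj_sq (hreg : G.IsRegularOfDegree d) (x : V → ℝ) :
    ∑ i, ∑ j, (if G.Adj i j then x i ^ 2 else 0) = d * ∑ i, x i ^ 2 := by
  simp_rw [← sum_filter, sum_const, ← G.neighborFinset_eq_filter,
    G.card_neighborFinset_eq_degree, hreg _, nsmul_eq_mul, mul_sum]

lemma neg_mul_sum_sq_le_dotProduct_adjMatrix_mulVec (hreg : G.IsRegularOfDegree d)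
    (x : V → ℝ) : -(d * ∑ i, x i ^ 2) ≤ x ⬝ᵥ G.adjMatrix ℝ *ᵥ x := by
  have hsymm : ∑ i, ∑ j, (if G.Adj i j then x j ^ 2 else 0) =
      ∑ i, ∑ j, (if G.Adj i j then x i ^ 2 else 0) := by
    rw [sum_comm]
    simp_rw [G.adj_comm]
  have hexpand : ∑ i, ∑ j, (if G.Adj i j then (x i + x j) ^ 2 else 0) =
      ∑ i, ∑ j, (if G.Adj i j then x i ^ 2 else 0) +
        ∑ i, ∑ j, (if G.Adj i j then x j ^ 2 else 0) + 2 * (x ⬝ᵥ G.adjMatrix ℝ *ᵥ x) := by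
    rw [SimpleGraph.dotProduct_mulVec_adjMatrix, mul_sum, ← sum_add_distrib, ← sum_add_distrib]
    refine sum_congr rfl fun i _ => ?_
    rw [mul_sum, ← sum_add_distrib, ← sum_add_distrib]
    refine sum_congr rfl fun j _ => ?_
    split_ifs <;> ring
  have hnonneg : 0 ≤ ∑ i, ∑ j, (if G.Adj i j then (x i + x j) ^ 2 else 0) :=
    sum_nonneg fun i _ => sum_nonneg fun j _ => by split_ifs <;> positivity
  linarith [sum_sum_ite_adj_sq hreg x]

end RegularGraph

section SignVectors

variable {ι : Type*} [Fintype ι] [DecidableEq ι]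

def signVec (s : ι → ℤˣ) (i : ι) : ℝ := ((s i : ℤ) : ℝ)

lemma sum_signVec_mul_signVec (i j : ι) :
    ∑ s : ι → ℤˣ, signVec s i * signVec s j = if i = j then 2 ^ Fintype.card ι else 0 := by
  split_ifs with hij
  · subst hij
    simp [signVec, ← Int.cast_mul, ← Units.val_mul, Int.units_mul_self, Fintype.card_units_int]
  · -- flipping the sign of the `i`-th coordinate negates every term
    have hflip := Equiv.sum_comp (Equiv.mulLeft (Pi.mulSingle i (-1) : ι → ℤˣ))
      fun s => signVec s i * signVec s j
    simp only [Equiv.coe_mulLeft, signVec, Pi.mul_apply, Pi.mulSingle_eq_same,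
      Pi.mulSingle_eq_of_ne (Ne.symm hij), one_mul, neg_mul, Units.val_neg, Int.cast_neg,
      sum_neg_distrib] at hflip ⊢
    linarith

lemma sum_signVec_dotProduct_mulVec (M : Matrix ι ι ℝ) :
    ∑ s : ι → ℤˣ, signVec s ⬝ᵥ M *ᵥ signVec s = 2 ^ Fintype.card ι * M.trace := by
  have hexpand : ∀ s : ι → ℤˣ, signVec s ⬝ᵥ M *ᵥ signVec s =
      ∑ i, ∑ j, M i j * (signVec s i * signVec s j) := fun s => by
    simp only [dotProduct, mulVec, mul_sum]
    exact sum_congr rfl fun i _ => sum_congr rfl fun j _ => by ring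
  simp_rw [hexpand]
  rw [sum_comm]
  simp_rw [sum_comm (γ := ι → ℤˣ), ← mul_sum, sum_signVec_mul_signVec, mul_ite, mul_zero,
    sum_ite_eq, mem_univ, if_true, ← sum_mul, Matrix.trace, Matrix.diag, mul_comm]

lemma exists_trace_le_signVec_dotProduct_mulVec (M : Matrix ι ι ℝ) :
    ∃ s : ι → ℤˣ, M.trace ≤ signVec s ⬝ᵥ M *ᵥ signVec s := by
  have hsum : ∑ _s : ι → ℤˣ, M.trace ≤ ∑ s : ι → ℤˣ, signVec s ⬝ᵥ M *ᵥ signVec s := by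
    rw [sum_signVec_dotProduct_mulVec, sum_const, card_univ, Fintype.card_fun,
      Fintype.card_units_int, nsmul_eq_mul, Nat.cast_pow, Nat.cast_ofNat]
  obtain ⟨s, -, hs⟩ := exists_le_of_sum_le univ_nonempty hsum
  exact ⟨s, hs⟩

end SignVectors

section QuadraticForm

variable {n : ℕ} (G : SimpleGraph (Fin n)) [DecidableRel G.Adj]

lemma dotProduct_QG_mulVec (x : Fin n → ℝ) :
    x ⬝ᵥ QG n G *ᵥ x = (∑ i, x i ^ 2 - x ⬝ᵥ G.adjMatrix ℝ *ᵥ x / 3) / 2 := by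
  rw [QG, smul_mulVec, dotProduct_smul, sub_mulVec, smul_mulVec, one_mulVec, dotProduct_sub,
    dotProduct_smul]
  simp only [smul_eq_mul, dotProduct, sq]
  ring

lemma dotProduct_QG_mulVec_le (hreg : G.IsRegularOfDegree 3) (x : Fin n → ℝ) :
    x ⬝ᵥ QG n G *ᵥ x ≤ ∑ i, x i ^ 2 := by
  have hA := neg_mul_sum_sq_le_dotProduct_adjMatrix_mulVec hreg x
  rw [dotProduct_QG_mulVec]
  push_cast at hA
  linarith

lemma trace_QG : (QG n G).trace = n / 2 := by
  simp [QG, trace_sub]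
  ring

end QuadraticForm

def IsCubePoint (n : ℕ) (x : Fin n → ℝ) : Prop :=
  ∀ i, x i = 1 / √n ∨ x i = -(1 / √n)

namespace IsCubePoint

variable {n : ℕ} {x : Fin n → ℝ}

lemma of_signVec (s : Fin n → ℤˣ) : IsCubePoint n ((√n)⁻¹ • signVec s) := fun i => by
  rcases Int.units_eq_one_or (s i) with hs | hs <;> simp [signVec, hs]

lemma mul_sq_eq_one (hx : IsCubePoint n x) (i : Fin n) : (n : ℝ) * x i ^ 2 = 1 := by
  have hn : (0 : ℝ) < n := by exact_mod_cast i.pos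
  rcases hx i with h | h <;> simp [h, Real.sq_sqrt hn.le, hn.ne']

lemma sum_sq (hn : 0 < n) (hx : IsCubePoint n x) : ∑ i, x i ^ 2 = 1 := by
  have hn' : (n : ℝ) ≠ 0 := by positivity
  simp_rw [fun i => eq_div_of_mul_eq hn' ((mul_comm _ _).trans (hx.mul_sq_eq_one i)), sum_const,
    card_univ, Fintype.card_fin, nsmul_eq_mul, mul_one_div_cancel hn']

lemma sum_abs (hx : IsCubePoint n x) : ∑ i, |x i| = √n := by
  have habs : ∀ i, |x i| = 1 / √n := fun i => by
    rcases hx i with h | h <;> simp [h]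
  simp_rw [habs, sum_const, card_univ, Fintype.card_fin, nsmul_eq_mul, mul_one_div, Real.div_sqrt]

end IsCubePoint

lemma exists_isCubePoint_half_le {n : ℕ} (hn : 0 < n) (G : SimpleGraph (Fin n))
    [DecidableRel G.Adj] :
    ∃ x, IsCubePoint n x ∧ 1 / 2 ≤ x ⬝ᵥ QG n G *ᵥ x := by
  have hn' : (0 : ℝ) < n := by exact_mod_cast hn
  obtain ⟨s, hs⟩ := exists_trace_le_signVec_dotProduct_mulVec (QG n G)
  refine ⟨(√n)⁻¹ • signVec s, IsCubePoint.of_signVec s, ?_⟩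
  rw [trace_QG] at hs
  rw [mulVec_smul, dotProduct_smul, smul_dotProduct, smul_eq_mul, smul_eq_mul, ← mul_assoc,
    ← mul_inv, Real.mul_self_sqrt hn'.le]
  calc 1 / 2 = (n : ℝ)⁻¹ * (n / 2) := by field_simp
    _ ≤ (n : ℝ)⁻¹ * (signVec s ⬝ᵥ QG n G *ᵥ signVec s) := by gcongr

section MaxCut

variable {n : ℕ} {G : SimpleGraph (Fin n)} [DecidableRel G.Adj]

lemma le_maxCutVal (hn : 0 < n) (hreg : G.IsRegularOfDegree 3) {x : Fin n → ℝ}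
    (hx : IsCubePoint n x) :
    x ⬝ᵥ QG n G *ᵥ x ≤ maxCutVal n G := by
  refine le_csSup ⟨1, ?_⟩ ⟨x, hx, rfl⟩
  rintro _ ⟨y, hy : IsCubePoint n y, rfl⟩
  exact (dotProduct_QG_mulVec_le G hreg y).trans (hy.sum_sq hn).le

lemma half_le_maxCutVal (hn : 0 < n) (hreg : G.IsRegularOfDegree 3) :
    1 / 2 ≤ maxCutVal n G := by
  obtain ⟨x, hx, hhalf⟩ := exists_isCubePoint_half_le hn G
  exact hhalf.trans (le_maxCutVal hn hreg hx)

end MaxCut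

lemma EuclideanSpace.sum_sq_eq_one_of_norm_eq_one {ι : Type*} [Fintype ι]
    {x : EuclideanSpace ℝ ι} (hx : ‖x‖ = 1) : ∑ i, x i ^ 2 = 1 := by
  rw [← EuclideanSpace.real_norm_sq_eq, hx, one_pow]

section UnitSphere

variable {n : ℕ} {G : SimpleGraph (Fin n)} [DecidableRel G.Adj] {k : ℕ}

lemma pG_le_prod (hreg : G.IsRegularOfDegree 3) {x : EuclideanSpace ℝ (Fin n)}
    (hx : ‖x‖ = 1) :
    pG n G k x ≤ ∏ i, ((n : ℝ) * x i ^ 2) ^ k := by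
  have hq : x ⬝ᵥ QG n G *ᵥ x ≤ 1 :=
    (dotProduct_QG_mulVec_le G hreg x).trans (EuclideanSpace.sum_sq_eq_one_of_norm_eq_one hx).le
  have hprod : 0 ≤ ∏ i, ((n : ℝ) * x i ^ 2) ^ k := prod_nonneg fun i _ => by positivity
  unfold pG
  nlinarith [mul_nonneg (sub_nonneg.2 hq) hprod]

lemma pG_le_one (hreg : G.IsRegularOfDegree 3) {x : EuclideanSpace ℝ (Fin n)}
    (hx : ‖x‖ = 1) :
    pG n G k x ≤ 1 := by
  have hprod : ∏ i, ((n : ℝ) * x i ^ 2) ≤ 1 := by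
    simpa [EuclideanSpace.sum_sq_eq_one_of_norm_eq_one hx] using
      prod_card_mul_sq_le_sum_sq_pow (ι := Fin n) x
  refine (pG_le_prod hreg hx).trans ?_
  rw [prod_pow]
  exact pow_le_one₀ (prod_nonneg fun i _ => by positivity) hprod

lemma prod_pow_le_half_of_sum_abs_le (hn : 0 < n) (hk : 0 < k) {δ : ℝ}
    (hδl : 2 * Real.log 2 / k ≤ δ) (hδu : δ < n) {x : Fin n → ℝ}
    (hx : ∑ i, |x i| ≤ n / √(n + δ)) : ∏ i, ((n : ℝ) * x i ^ 2) ^ k ≤ 1 / 2 := by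
  have hδ : 0 ≤ δ := (by positivity : 0 ≤ 2 * Real.log 2 / k).trans hδl
  have hratio : (∑ i, |x i|) ^ 2 / n ≤ n / (n + δ) := by
    have hsq : (∑ i, |x i|) ^ 2 ≤ (n / √(n + δ)) ^ 2 :=
      pow_le_pow_left₀ (sum_nonneg fun i _ => abs_nonneg _) hx 2
    rw [div_pow, Real.sq_sqrt (by positivity)] at hsq
    calc (∑ i, |x i|) ^ 2 / n ≤ n ^ 2 / (n + δ) / n := by gcongr
      _ = n / (n + δ) := by field_simp
  have hprod : ∏ i, ((n : ℝ) * x i ^ 2) ≤ ((n : ℝ) / (n + δ)) ^ n := by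
    have := prod_card_mul_sq_le_sq_sum_abs_div_card_pow (ι := Fin n) x
    simp only [Fintype.card_fin] at this
    exact this.trans (pow_le_pow_left₀ (by positivity) hratio n)
  calc ∏ i, ((n : ℝ) * x i ^ 2) ^ k = (∏ i, ((n : ℝ) * x i ^ 2)) ^ k := prod_pow _ _ _
    _ ≤ (((n : ℝ) / (n + δ)) ^ n) ^ k := by gcongr
    _ = ((n : ℝ) / (n + δ)) ^ (n * k) := (pow_mul _ _ _).symm
    _ ≤ 1 / 2 := div_add_pow_mul_le_half hn hk hδl hδu

lemma pG_toLp {y : Fin n → ℝ} (hy : IsCubePoint n y) :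
    pG n G k (WithLp.toLp 2 y) = y ⬝ᵥ QG n G *ᵥ y := by
  simp [pG, hy.mul_sq_eq_one]

lemma norm_toLp_eq_one (hn : 0 < n) {y : Fin n → ℝ} (hy : IsCubePoint n y) :
    ‖(WithLp.toLp 2 y : EuclideanSpace ℝ (Fin n))‖ = 1 := by
  rw [← pow_eq_one_iff_of_nonneg (norm_nonneg _) two_ne_zero, EuclideanSpace.real_norm_sq_eq]
  exact hy.sum_sq hn

end UnitSphere

/-- away from the hypercube (small `ℓ¹` norm), `p_G` is bounded by
`MaxCut(G)`; consequently the maximum of `p_G` over the sphere is attained on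
`T_δ = {x : ‖x‖₂ = 1, ‖x‖₁ ≥ η}` with `η = n/√(n+δ)`. -/
theorem stmt_17 (n : ℕ) (hn : 0 < n) (G : SimpleGraph (Fin n)) [DecidableRel G.Adj]
    (hreg : G.IsRegularOfDegree 3) (k : ℕ) (hk : 0 < k)
    (δ : ℝ) (hδl : 2 * Real.log 2 / k ≤ δ) (hδu : δ < n) :
    (∀ x : EuclideanSpace ℝ (Fin n), ‖x‖ = 1 →
        (∑ i, |x i|) ≤ n / Real.sqrt (n + δ) → pG n G k x ≤ maxCutVal n G) ∧
    sSup {w : ℝ | ∃ x : EuclideanSpace ℝ (Fin n), ‖x‖ = 1 ∧ w = pG n G k x} =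
      sSup {w : ℝ | ∃ x : EuclideanSpace ℝ (Fin n),
        ‖x‖ = 1 ∧ (∑ i, |x i|) ≥ n / Real.sqrt (n + δ) ∧ w = pG n G k x} := by
  have hsmall : ∀ x : EuclideanSpace ℝ (Fin n), ‖x‖ = 1 →
      (∑ i, |x i|) ≤ n / √(n + δ) → pG n G k x ≤ maxCutVal n G := fun x hx hl1 =>
    (pG_le_prod hreg hx).trans <|
      (prod_pow_le_half_of_sum_abs_le hn hk hδl hδu hl1).trans (half_le_maxCutVal hn hreg)
  refine ⟨hsmall, ?_⟩
  set S := {w : ℝ | ∃ x : EuclideanSpace ℝ (Fin n), ‖x‖ = 1 ∧ w = pG n G k x}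
  set T := {w : ℝ | ∃ x : EuclideanSpace ℝ (Fin n),
    ‖x‖ = 1 ∧ (∑ i, |x i|) ≥ n / √(n + δ) ∧ w = pG n G k x}
  have hTS : T ⊆ S := fun _ ⟨x, hx, _, hw⟩ => ⟨x, hx, hw⟩
  have hS : BddAbove S := ⟨1, by rintro _ ⟨x, hx, rfl⟩; exact pG_le_one hreg hx⟩
  have hδ : 0 ≤ δ := (by positivity : 0 ≤ 2 * Real.log 2 / k).trans hδl
  have hcube : ∀ y, IsCubePoint n y → y ⬝ᵥ QG n G *ᵥ y ∈ T := fun y hy =>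
    ⟨WithLp.toLp 2 y, norm_toLp_eq_one hn hy,
      (div_sqrt_add_le_sqrt (by exact_mod_cast hn) hδ).trans_eq hy.sum_abs.symm,
      (pG_toLp hy).symm⟩
  obtain ⟨y, hy, -⟩ := exists_isCubePoint_half_le hn G
  have hmax : maxCutVal n G ≤ sSup T := csSup_le ⟨_, y, hy, rfl⟩ <| by
    rintro _ ⟨z, hz : IsCubePoint n z, rfl⟩
    exact le_csSup (hS.mono hTS) (hcube z hz)
  refine csSup_eq_csSup_of_forall_mem_diff_le hS ⟨_, hcube y hy⟩ hTS ?_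
  rintro _ ⟨⟨x, hx, rfl⟩, hxT⟩
  exact (hsmall x hx (le_of_not_ge fun hl1 => hxT ⟨x, hx, hl1, rfl⟩)).trans hmax
end
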